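/- arXiv:1508.07838 — 7 statements merged into one kernel-verified Lean document; each statement's English description precedes it below -/
import Mathlib

section
/- Let P₁, P₂, …, P be probability measures on a measurable space (E, 𝓔) with densities f₁, f₂, …, f with respect to a σ-finite measure λ. Then liminf_{n→∞} fₙ = f holds λ-a.e. if and only if liminf_{n→∞} d P_n^{ac}/dP = 1 holds P-a.e., where P_n^{ac} denotes the absolutely continuous part of Pₙ with respect to P. -/
/-!
With respect to `P = λ·f`, the absolutely continuous part of `Pₙ = λ·fₙ` has density `fₙ / f`,
so on `{f ≠ 0}` the condition `liminf fₙ / f = 1` is just `liminf fₙ = f`. On `{f = 0}` nothing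
is required: by Fatou, `∫ liminf fₙ ≤ 1 = ∫ f`, so once `liminf fₙ ≥ f` a.e. the two agree a.e.
-/

open MeasureTheory Filter
open scoped ENNReal

lemma ENNReal.liminf_div_const {ι : Type*} {l : Filter ι} [l.NeBot] (u : ι → ℝ≥0∞)
    {c : ℝ≥0∞} (hc : c ≠ 0) :
    liminf (fun i => u i / c) l = liminf u l / c := by
  simpa [div_eq_mul_inv, mul_comm] using
    ENNReal.liminf_mul_const_of_ne_top (u := u) (ENNReal.inv_ne_top.2 hc)

namespace MeasureTheory

variable {α : Type*} [MeasurableSpace α] {μ : Measure α}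

lemma Measure.rnDeriv_withDensity_withDensity [SigmaFinite μ] {f g : α → ℝ≥0∞}
    [SigmaFinite (μ.withDensity f)] [SigmaFinite (μ.withDensity g)]
    (hf : AEMeasurable f μ) (hg : AEMeasurable g μ) :
    (μ.withDensity f).rnDeriv (μ.withDensity g) =ᵐ[μ.withDensity g] fun x => f x / g x := by
  have hg_ac : μ.withDensity g ≪ μ := withDensity_absolutelyContinuous μ g
  filter_upwards [Measure.rnDeriv_eq_div (withDensity_absolutelyContinuous μ f) hg_ac,
    hg_ac (Measure.rnDeriv_withDensity₀ μ hf), hg_ac (Measure.rnDeriv_withDensity₀ μ hg)]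
    with x hx hfx hgx
  rw [hx, hfx, hgx]

lemma ae_liminf_eq_of_ae_le_liminf {f : ℕ → α → ℝ≥0∞} {g : α → ℝ≥0∞}
    (hf : ∀ n, Measurable (f n)) (hfg : ∀ n, ∫⁻ x, f n x ∂μ ≤ ∫⁻ x, g x ∂μ)
    (hg : ∫⁻ x, g x ∂μ ≠ ∞) (hle : ∀ᵐ x ∂μ, g x ≤ liminf (fun n => f n x) atTop) :
    ∀ᵐ x ∂μ, liminf (fun n => f n x) atTop = g x := by
  have hfatou : ∫⁻ x, liminf (fun n => f n x) atTop ∂μ ≤ ∫⁻ x, g x ∂μ :=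
    (lintegral_liminf_le hf).trans (liminf_le_of_frequently_le' (Frequently.of_forall hfg))
  filter_upwards [ae_eq_of_ae_le_of_lintegral_le hle hg (Measurable.liminf hf).aemeasurable
    hfatou] with x hx using hx.symm

end MeasureTheory

/-- `liminf fₙ = f` `λ`-a.e. iff `liminf dPₙ^{ac}/dP = 1` `P`-a.e., where the
Radon–Nikodym derivative `(Pₙ).rnDeriv P` is the density of the absolutely
continuous part of `Pₙ` with respect to `P`. -/
theorem stmt3 {E : Type*} [MeasurableSpace E]
    (lam : Measure E) [SigmaFinite lam]
    (Pn : ℕ → Measure E) (P : Measure E)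
    [∀ n, IsProbabilityMeasure (Pn n)] [IsProbabilityMeasure P]
    (f : ℕ → E → ℝ≥0∞) (g : E → ℝ≥0∞)
    (hf : ∀ n, Measurable (f n)) (hg : Measurable g)
    (hPn : ∀ n, Pn n = lam.withDensity (f n)) (hP : P = lam.withDensity g) :
    (∀ᵐ x ∂lam, liminf (fun n => f n x) atTop = g x) ↔
      (∀ᵐ x ∂P, liminf (fun n => (Pn n).rnDeriv P x) atTop = 1) := by
  obtain rfl : Pn = fun n => lam.withDensity (f n) := funext hPn
  subst hP
  have hg_int : ∫⁻ x, g x ∂lam = 1 := by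
    rw [← setLIntegral_univ, ← withDensity_apply _ .univ, measure_univ]
  have hf_int (n : ℕ) : ∫⁻ x, f n x ∂lam = 1 := by
    rw [← setLIntegral_univ, ← withDensity_apply _ .univ, measure_univ]
  have hg_lt_top : ∀ᵐ x ∂lam, g x < ∞ := ae_lt_top hg (by simp [hg_int])
  have hratio : ∀ᵐ x ∂lam.withDensity g, ∀ n,
      (lam.withDensity (f n)).rnDeriv (lam.withDensity g) x = f n x / g x :=
    ae_all_iff.2 fun n =>
      Measure.rnDeriv_withDensity_withDensity (hf n).aemeasurable hg.aemeasurable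
  calc (∀ᵐ x ∂lam, liminf (fun n => f n x) atTop = g x)
      ↔ ∀ᵐ x ∂lam, g x ≠ 0 → liminf (fun n => f n x) atTop = g x := by
        refine ⟨fun h => h.mono fun x hx _ => hx, fun h => ?_⟩
        refine ae_liminf_eq_of_ae_le_liminf hf (by simp [hf_int, hg_int]) (by simp [hg_int]) ?_
        filter_upwards [h] with x hx
        by_cases hx0 : g x = 0
        · simp [hx0]
        · exact (hx hx0).ge
    _ ↔ ∀ᵐ x ∂lam, g x ≠ 0 → liminf (fun n => f n x / g x) atTop = 1 := by
        refine eventually_congr (hg_lt_top.mono fun x hx => imp_congr_right fun hx0 => ?_)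
        rw [ENNReal.liminf_div_const _ hx0, ENNReal.div_eq_one_iff hx0 hx.ne]
    _ ↔ ∀ᵐ x ∂lam.withDensity g,
          liminf (fun n => (lam.withDensity (f n)).rnDeriv (lam.withDensity g) x) atTop = 1 := by
        rw [← ae_withDensity_iff hg]
        exact eventually_congr (hratio.mono fun x hx => by simp only [hx])
end

section
/- Let X₁, X₂, …, X be random elements in a measurable space (E, 𝓔) with distributions Pₙ and P having densities fₙ and f with respect to a σ-finite measure λ. Then liminf_{n→∞} fₙ = f λ-a.e. if and only if there exists a coupling (X̂₁, X̂₂, …, X̂) of X₁, X₂, …, X and an ℕ-valued random variable N such that almost surely X̂ₙ = X̂ for all n ≥ N. -/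
open MeasureTheory Filter Set
open scoped ENNReal

/-!
A coupling with `X̂ₙ = X̂` for `n ≥ N` amounts to a decomposition `P = ∑ₘ νₘ` whose partial sums
satisfy `∑_{m ≤ n} νₘ ≤ Pₙ`: given the coupling, `νₘ` is the law of `X̂` on `{N = m}`; given the
decomposition, draw `(N, X̂)` from `∑ₘ δₘ ⊗ νₘ` and, independently, `Yₙ` from the normalised
remainder `Pₙ - ∑_{m ≤ n} νₘ`, and put `X̂ₙ = X̂` on `{N ≤ n}` and `X̂ₙ = Yₙ` elsewhere.

For densities such a decomposition exists as soon as `liminf fₙ = f` (take the increments of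
`n ↦ ⨅_{k ≥ n} fₖ`), and conversely the densities of the `νₘ` have partial sums below `fₙ` and
sum `f`, which forces `f ≤ liminf fₙ`. Fatou's lemma and `∫ fₙ = ∫ f = 1` upgrade this to equality.
-/

def increments (u : ℕ → ℝ≥0∞) : ℕ → ℝ≥0∞
  | 0 => u 0
  | m + 1 => u (m + 1) - u m

lemma sum_range_succ_increments {u : ℕ → ℝ≥0∞} (hu : Monotone u) (n : ℕ) :
    ∑ m ∈ Finset.range (n + 1), increments u m = u n := by
  induction n with
  | zero => simp [increments]
  | succ n ih =>
    rw [Finset.sum_range_succ, ih, increments, add_tsub_cancel_of_le (hu n.le_succ)]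

lemma tsum_increments {u : ℕ → ℝ≥0∞} (hu : Monotone u) : ∑' m, increments u m = ⨆ n, u n := by
  simp_rw [ENNReal.tsum_eq_iSup_nat' (tendsto_add_atTop_nat 1), sum_range_succ_increments hu]

lemma monotone_iInf_ge (b : ℕ → ℝ≥0∞) : Monotone fun n => ⨅ k ≥ n, b k :=
  fun _ _ hmn => biInf_mono fun _ hk => hmn.trans hk

lemma tsum_increments_iInf_ge (b : ℕ → ℝ≥0∞) :
    ∑' m, increments (fun n => ⨅ k ≥ n, b k) m = liminf b atTop := by
  rw [tsum_increments (monotone_iInf_ge b), liminf_eq_iSup_iInf_of_nat]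

lemma sum_range_succ_increments_iInf_ge_le (b : ℕ → ℝ≥0∞) (n : ℕ) :
    ∑ m ∈ Finset.range (n + 1), increments (fun n => ⨅ k ≥ n, b k) m ≤ b n := by
  rw [sum_range_succ_increments (monotone_iInf_ge b)]
  exact iInf₂_le n le_rfl

lemma tsum_le_liminf_of_sum_range_le {a b : ℕ → ℝ≥0∞}
    (h : ∀ n, ∑ m ∈ Finset.range (n + 1), a m ≤ b n) : ∑' m, a m ≤ liminf b atTop := by
  rw [ENNReal.tsum_eq_iSup_nat]
  refine iSup_le fun n => le_liminf_of_le (by isBoundedDefault) ?_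
  filter_upwards [eventually_ge_atTop n] with k hk
  exact (Finset.sum_le_sum_of_subset (Finset.range_subset_range.2 (by omega))).trans (h k)

section

variable {E : Type} [MeasurableSpace E]

def HasEventuallyEqualCoupling (Pn : ℕ → Measure E) (P : Measure E) : Prop :=
  ∃ (Ω : Type) (_ : MeasurableSpace Ω) (Pr : Measure Ω),
    IsProbabilityMeasure Pr ∧
    ∃ (X : ℕ → Ω → E) (X' : Ω → E) (N : Ω → ℕ),
      (∀ n, Measurable (X n)) ∧ Measurable X' ∧ Measurable N ∧
      (∀ n, Pr.map (X n) = Pn n) ∧ Pr.map X' = P ∧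
      (∀ᵐ ω ∂Pr, ∀ n, N ω ≤ n → X n ω = X' ω)

theorem HasEventuallyEqualCoupling.exists_sum_eq {Pn : ℕ → Measure E} {P : Measure E}
    (h : HasEventuallyEqualCoupling Pn P) :
    ∃ ν : ℕ → Measure E, Measure.sum ν = P ∧ ∀ n, ∑ m ∈ Finset.range (n + 1), ν m ≤ Pn n := by
  obtain ⟨Ω, _, Pr, _, X, X', N, hX, hX', hN, hXn, hX'P, hae⟩ := h
  have hfiber : ∀ m, MeasurableSet (N ⁻¹' {m}) := fun m => hN (measurableSet_singleton m)
  refine ⟨fun m => (Pr.restrict (N ⁻¹' {m})).map X', ?_, fun n => Measure.le_iff.2 fun A hA => ?_⟩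
  · rw [← Measure.map_sum hX'.aemeasurable, ← Measure.restrict_iUnion (pairwise_disjoint_fiber N)
      hfiber, ← preimage_iUnion, iUnion_of_singleton, preimage_univ, Measure.restrict_univ, hX'P]
  · calc (∑ m ∈ Finset.range (n + 1), (Pr.restrict (N ⁻¹' {m})).map X') A
        = ∑ m ∈ Finset.range (n + 1), Pr (X' ⁻¹' A ∩ N ⁻¹' {m}) := by
          simp only [Measure.finsetSum_apply, Measure.map_apply hX' hA,
            Measure.restrict_apply (hX' hA)]
      _ = Pr (⋃ m ∈ Finset.range (n + 1), X' ⁻¹' A ∩ N ⁻¹' {m}) :=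
          (measure_biUnion_finset (fun _ _ _ _ hab =>
            ((pairwise_disjoint_fiber N hab).inter_left' _).inter_right' _)
            fun m _ => (hX' hA).inter (hfiber m)).symm
      _ ≤ Pr (X n ⁻¹' A) := by
          refine measure_mono_ae ?_
          filter_upwards [hae] with ω hω (hmem : ω ∈ ⋃ m ∈ Finset.range (n + 1), _)
          simp only [mem_iUnion, mem_inter_iff, mem_preimage, mem_singleton_iff,
            Finset.mem_range, exists_prop] at hmem
          obtain ⟨m, hm, hXA, rfl⟩ := hmem
          show X n ω ∈ A
          rwa [hω n (Nat.lt_succ_iff.1 hm)]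
      _ = Pn n A := by rw [← hXn n, Measure.map_apply (hX n) hA]

-- On `ω = ((N, X̂), Y)`, the `n`-th coupled variable: `X̂` once `N ≤ n`, and `Yₙ` before.
def spliceSeq (n : ℕ) (ω : (ℕ × E) × (ℕ → E)) : E :=
  if ω.1.1 ≤ n then ω.1.2 else ω.2 n

lemma measurable_spliceSeq (n : ℕ) : Measurable (spliceSeq (E := E) n) :=
  Measurable.ite (measurable_fst.fst measurableSet_Iic) measurable_fst.snd
    ((measurable_pi_apply n).comp measurable_snd)

lemma map_spliceSeq_apply (μ₀ : Measure (ℕ × E)) (ρ : ℕ → Measure E)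
    [∀ n, IsProbabilityMeasure (ρ n)] (n : ℕ) {A : Set E} (hA : MeasurableSet A) :
    (μ₀.prod (Measure.infinitePi ρ)).map (spliceSeq n) A =
      μ₀ {p | p.1 ≤ n ∧ p.2 ∈ A} + μ₀ {p | n < p.1} * ρ n A := by
  have hpre : spliceSeq n ⁻¹' A = {p : ℕ × E | p.1 ≤ n ∧ p.2 ∈ A} ×ˢ univ ∪
      {p : ℕ × E | n < p.1} ×ˢ ((fun y => y n) ⁻¹' A) := by
    ext ⟨⟨m, x⟩, y⟩
    by_cases hm : m ≤ n <;> simp [spliceSeq, hm, not_le.1]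
  have hdisj : Disjoint ({p : ℕ × E | p.1 ≤ n ∧ p.2 ∈ A} ×ˢ (univ : Set (ℕ → E)))
      ({p : ℕ × E | n < p.1} ×ˢ ((fun y => y n) ⁻¹' A)) :=
    Disjoint.set_prod_left (disjoint_left.2 fun _ hp hp' => hp.1.not_gt hp') _ _
  rw [Measure.map_apply (measurable_spliceSeq n) hA, hpre,
    measure_union hdisj ((measurable_fst measurableSet_Ioi).prod (measurable_pi_apply n hA)),
    Measure.prod_prod, Measure.prod_prod, measure_univ, mul_one,
    ← Measure.map_apply (measurable_pi_apply n) hA, Measure.infinitePi_map_eval]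

lemma MeasureTheory.FiniteMeasure.toMeasure_apply_eq_mul_normalize [Nonempty E]
    (μ : FiniteMeasure E) (s : Set E) :
    (μ : Measure E) s = (μ : Measure E) univ * (μ.normalize : Measure E) s := by
  have := congrArg ((↑) : NNReal → ℝ≥0∞) (μ.self_eq_mass_mul_normalize s)
  push_cast at this
  rwa [FiniteMeasure.ennreal_mass, FiniteMeasure.ennreal_coeFn_eq_coeFn_toMeasure,
    ProbabilityMeasure.ennreal_coeFn_eq_coeFn_toMeasure] at this

noncomputable def taggedSum (ν : ℕ → Measure E) : Measure (ℕ × E) :=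
  Measure.sum fun m => (ν m).map (Prod.mk m)

lemma taggedSum_apply (ν : ℕ → Measure E) {S : Set (ℕ × E)} (hS : MeasurableSet S) :
    taggedSum ν S = ∑' m, ν m (Prod.mk m ⁻¹' S) := by
  simp only [taggedSum, Measure.sum_apply _ hS, Measure.map_apply measurable_prodMk_left hS]

lemma taggedSum_snd_mem (ν : ℕ → Measure E) {A : Set E} (hA : MeasurableSet A) :
    taggedSum ν {p | p.2 ∈ A} = Measure.sum ν A := by
  rw [taggedSum_apply ν (show MeasurableSet {p : ℕ × E | p.2 ∈ A} from measurable_snd hA),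
    Measure.sum_apply _ hA]
  rfl

lemma measurableSet_fst_le_snd_mem (n : ℕ) {A : Set E} (hA : MeasurableSet A) :
    MeasurableSet {p : ℕ × E | p.1 ≤ n ∧ p.2 ∈ A} :=
  (measurable_fst measurableSet_Iic).inter (measurable_snd hA)

lemma taggedSum_fst_le_snd_mem (ν : ℕ → Measure E) (n : ℕ) {A : Set E} (hA : MeasurableSet A) :
    taggedSum ν {p | p.1 ≤ n ∧ p.2 ∈ A} = (∑ m ∈ Finset.range (n + 1), ν m) A := by
  rw [taggedSum_apply ν (measurableSet_fst_le_snd_mem n hA), Measure.finsetSum_apply,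
    tsum_eq_sum (s := Finset.range (n + 1))]
  · refine Finset.sum_congr rfl fun m hm => ?_
    simp [Nat.lt_succ_iff.1 (Finset.mem_range.1 hm)]
  · intro m hm
    simp [show ¬ m ≤ n by simpa [Nat.lt_succ_iff] using hm]

theorem hasEventuallyEqualCoupling_sum {Pn : ℕ → Measure E} [∀ n, IsProbabilityMeasure (Pn n)]
    (ν : ℕ → Measure E) [IsProbabilityMeasure (Measure.sum ν)]
    (hle : ∀ n, ∑ m ∈ Finset.range (n + 1), ν m ≤ Pn n) :
    HasEventuallyEqualCoupling Pn (Measure.sum ν) := by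
  have : Nonempty E := nonempty_of_isProbabilityMeasure (Measure.sum ν)
  set Q : ℕ → Measure E := fun n => ∑ m ∈ Finset.range (n + 1), ν m
  have : ∀ n, IsFiniteMeasure (Q n) := fun n => isFiniteMeasure_of_le _ (hle n)
  have : IsProbabilityMeasure (taggedSum ν) :=
    ⟨by simpa using taggedSum_snd_mem ν MeasurableSet.univ⟩
  have hlate : ∀ n, taggedSum ν {p | n < p.1} = (Pn n - Q n) univ := fun n => by
    rw [show {p : ℕ × E | n < p.1} = {p | p.1 ≤ n ∧ p.2 ∈ univ}ᶜ by ext; simp,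
      prob_compl_eq_one_sub (measurableSet_fst_le_snd_mem n MeasurableSet.univ),
      taggedSum_fst_le_snd_mem ν n MeasurableSet.univ,
      Measure.sub_apply MeasurableSet.univ (hle n), measure_univ (μ := Pn n)]
  -- When `Pn n = Q n`, `normalize` returns an arbitrary Dirac mass, which then carries weight `0`.
  let R : ℕ → FiniteMeasure E := fun n => ⟨Pn n - Q n, inferInstance⟩
  let ρ : ℕ → Measure E := fun n => (R n).normalize
  refine ⟨(ℕ × E) × (ℕ → E), inferInstance, (taggedSum ν).prod (Measure.infinitePi ρ),
    inferInstance, spliceSeq, fun ω => ω.1.2, fun ω => ω.1.1, measurable_spliceSeq,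
    measurable_fst.snd, measurable_fst.fst, fun n => ?_, ?_, ae_of_all _ fun ω n hn => if_pos hn⟩
  · ext A hA
    have hR : (Pn n - Q n) univ * ρ n A = (Pn n - Q n) A :=
      (FiniteMeasure.toMeasure_apply_eq_mul_normalize (R n) A).symm
    rw [map_spliceSeq_apply _ _ n hA, taggedSum_fst_le_snd_mem ν n hA, hlate n, hR,
      Measure.sub_apply hA (hle n), add_tsub_cancel_of_le ((hle n) A)]
  · ext A hA
    rw [Measure.map_apply measurable_fst.snd hA,
      show (fun ω : (ℕ × E) × (ℕ → E) => ω.1.2) ⁻¹' A = {p : ℕ × E | p.2 ∈ A} ×ˢ univ by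
        ext; simp,
      Measure.prod_prod, measure_univ, mul_one, taggedSum_snd_mem ν hA]

variable {μ : Measure E} {f : ℕ → E → ℝ≥0∞} {g : E → ℝ≥0∞}

lemma withDensity_finset_sum {ι : Type*} (s : Finset ι) {f : ι → E → ℝ≥0∞}
    (hf : ∀ i, Measurable (f i)) : μ.withDensity (∑ i ∈ s, f i) = ∑ i ∈ s, μ.withDensity (f i) := by
  classical
  induction s using Finset.induction_on with
  | empty => simp
  | insert i s hi ih =>
    rw [Finset.sum_insert hi, Finset.sum_insert hi, withDensity_add_left (hf i), ih]

lemma ae_le_of_withDensity_le [SigmaFinite μ] {u v : E → ℝ≥0∞} (hu : Measurable u)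
    (h : μ.withDensity u ≤ μ.withDensity v) : u ≤ᵐ[μ] v :=
  ae_le_of_forall_setLIntegral_le_of_sigmaFinite hu fun s hs _ => by
    simpa only [withDensity_apply _ hs] using h s

theorem exists_sum_eq_withDensity_of_liminf (hf : ∀ n, Measurable (f n))
    (h : ∀ᵐ x ∂μ, liminf (f · x) atTop = g x) :
    ∃ ν : ℕ → Measure E, Measure.sum ν = μ.withDensity g ∧
      ∀ n, ∑ m ∈ Finset.range (n + 1), ν m ≤ μ.withDensity (f n) := by
  set d : ℕ → E → ℝ≥0∞ := fun m x => increments (fun n => ⨅ k ≥ n, f k x) m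
  have hd : ∀ m, Measurable (d m) := by
    have hinf : ∀ n, Measurable fun x => ⨅ k ≥ n, f k x :=
      fun n => Measurable.iInf fun k => Measurable.iInf fun _ => hf k
    rintro (_ | m)
    · exact hinf 0
    · exact (hinf (m + 1)).sub (hinf m)
  refine ⟨fun m => μ.withDensity (d m), ?_, fun n => ?_⟩
  · rw [← withDensity_tsum hd]
    refine withDensity_congr_ae (h.mono fun x hx => ?_)
    rw [ENNReal.tsum_apply, tsum_increments_iInf_ge, hx]
  · rw [← withDensity_finset_sum _ hd]
    refine withDensity_mono (ae_of_all _ fun x => ?_)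
    rw [Finset.sum_apply]
    exact sum_range_succ_increments_iInf_ge_le (f · x) n

theorem ae_le_liminf_of_sum_eq_withDensity [SigmaFinite μ] (hg : Measurable g)
    [IsFiniteMeasure (μ.withDensity g)] (ν : ℕ → Measure E)
    (hsum : Measure.sum ν = μ.withDensity g)
    (hle : ∀ n, ∑ m ∈ Finset.range (n + 1), ν m ≤ μ.withDensity (f n)) :
    ∀ᵐ x ∂μ, g x ≤ liminf (f · x) atTop := by
  have hν_le : ∀ m, ν m ≤ μ.withDensity g := fun m => hsum ▸ Measure.le_sum ν m
  have : ∀ m, IsFiniteMeasure (ν m) := fun m => isFiniteMeasure_of_le _ (hν_le m)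
  set e : ℕ → E → ℝ≥0∞ := fun m => (ν m).rnDeriv μ
  have he : ∀ m, Measurable (e m) := fun m => Measure.measurable_rnDeriv _ _
  have hνe : ∀ m, μ.withDensity (e m) = ν m := fun m => Measure.withDensity_rnDeriv_eq _ _
    ((Measure.absolutelyContinuous_of_le (hν_le m)).trans (withDensity_absolutelyContinuous _ _))
  have htsum : ∑' m, e m =ᵐ[μ] g := by
    rw [← withDensity_eq_iff_of_sigmaFinite (Measurable.tsum' he).aemeasurable hg.aemeasurable,
      withDensity_tsum he, ← hsum]
    simp_rw [hνe]
  have hpartial : ∀ n, ∑ m ∈ Finset.range (n + 1), e m ≤ᵐ[μ] f n := fun n =>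
    ae_le_of_withDensity_le (by fun_prop)
      (by simpa only [withDensity_finset_sum _ he, hνe] using hle n)
  filter_upwards [htsum, ae_all_iff.2 hpartial] with x hx hxn
  rw [← hx, ENNReal.tsum_apply]
  exact tsum_le_liminf_of_sum_range_le fun n => by simpa only [Finset.sum_apply] using hxn n

theorem ae_liminf_eq_of_ae_le_of_lintegral_le (hf : ∀ n, Measurable (f n))
    (hg : ∫⁻ x, g x ∂μ ≠ ∞) (hint : ∀ n, ∫⁻ x, f n x ∂μ ≤ ∫⁻ x, g x ∂μ)
    (hle : ∀ᵐ x ∂μ, g x ≤ liminf (f · x) atTop) :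
    ∀ᵐ x ∂μ, liminf (f · x) atTop = g x := by
  have hfatou : ∫⁻ x, liminf (f · x) atTop ∂μ ≤ ∫⁻ x, g x ∂μ :=
    (lintegral_liminf_le hf).trans <|
      (liminf_le_liminf (Eventually.of_forall hint)).trans_eq (liminf_const _)
  filter_upwards [ae_eq_of_ae_le_of_lintegral_le hle hg (Measurable.liminf hf).aemeasurable hfatou]
    with x hx using hx.symm

lemma lintegral_eq_one_of_withDensity_eq {P : Measure E} [IsProbabilityMeasure P] {u : E → ℝ≥0∞}
    (h : P = μ.withDensity u) : ∫⁻ x, u x ∂μ = 1 := by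
  rw [← setLIntegral_univ, ← withDensity_apply _ MeasurableSet.univ, ← h, measure_univ]

theorem hasEventuallyEqualCoupling_iff_exists_sum {Pn : ℕ → Measure E} {P : Measure E}
    [∀ n, IsProbabilityMeasure (Pn n)] [IsProbabilityMeasure P] :
    HasEventuallyEqualCoupling Pn P ↔
      ∃ ν : ℕ → Measure E, Measure.sum ν = P ∧ ∀ n, ∑ m ∈ Finset.range (n + 1), ν m ≤ Pn n := by
  refine ⟨HasEventuallyEqualCoupling.exists_sum_eq, ?_⟩
  rintro ⟨ν, rfl, hle⟩
  exact hasEventuallyEqualCoupling_sum ν hle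

theorem exists_sum_eq_withDensity_iff_ae_liminf_eq [SigmaFinite μ] (hf : ∀ n, Measurable (f n))
    (hg : Measurable g) (hg_fin : ∫⁻ x, g x ∂μ ≠ ∞) (hint : ∀ n, ∫⁻ x, f n x ∂μ ≤ ∫⁻ x, g x ∂μ) :
    (∃ ν : ℕ → Measure E, Measure.sum ν = μ.withDensity g ∧
      ∀ n, ∑ m ∈ Finset.range (n + 1), ν m ≤ μ.withDensity (f n)) ↔
      ∀ᵐ x ∂μ, liminf (f · x) atTop = g x := by
  have := isFiniteMeasure_withDensity hg_fin
  refine ⟨fun ⟨ν, hsum, hle⟩ => ?_, exists_sum_eq_withDensity_of_liminf hf⟩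
  exact ae_liminf_eq_of_ae_le_of_lintegral_le hf hg_fin hint
    (ae_le_liminf_of_sum_eq_withDensity hg ν hsum hle)

end

/-- Convergence in density (`liminf fₙ = f` `λ`-a.e.) holds iff there exists a
coupling `(X̂₁, X̂₂, …, X̂)` of `X₁, X₂, …, X` and an `ℕ`-valued random variable
`N` such that almost surely `X̂ₙ = X̂` for all `n ≥ N`. -/
theorem stmt5 {E : Type} [MeasurableSpace E]
    (lam : Measure E) [SigmaFinite lam]
    (Pn : ℕ → Measure E) (P : Measure E)
    [∀ n, IsProbabilityMeasure (Pn n)] [IsProbabilityMeasure P]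
    (f : ℕ → E → ℝ≥0∞) (g : E → ℝ≥0∞)
    (hf : ∀ n, Measurable (f n)) (hg : Measurable g)
    (hPn : ∀ n, Pn n = lam.withDensity (f n)) (hP : P = lam.withDensity g) :
    (∀ᵐ x ∂lam, liminf (fun n => f n x) atTop = g x) ↔
      ∃ (Ω : Type) (_ : MeasurableSpace Ω) (Pr : Measure Ω),
        IsProbabilityMeasure Pr ∧
        ∃ (X : ℕ → Ω → E) (X' : Ω → E) (N : Ω → ℕ),
          (∀ n, Measurable (X n)) ∧ Measurable X' ∧ Measurable N ∧
          (∀ n, Pr.map (X n) = Pn n) ∧ Pr.map X' = P ∧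
          (∀ᵐ ω ∂Pr, ∀ n, N ω ≤ n → X n ω = X' ω) := by
  have hg_one := lintegral_eq_one_of_withDensity_eq hP
  rw [← exists_sum_eq_withDensity_iff_ae_liminf_eq hf hg (hg_one ▸ ENNReal.one_ne_top)
    fun n => by rw [hg_one, lintegral_eq_one_of_withDensity_eq (hPn n)]]
  simp_rw [← hPn, ← hP]
  exact hasEventuallyEqualCoupling_iff_exists_sum.symm
end

section
/- Let Q and ν₁, ν₂, … be finite measures on a measurable space with νₙ ≤ Q and Q − νₙ ≤ 2^{-n} (as measures, i.e., (Q − νₙ)(A) ≤ 2^{-n} for all measurable A, in fact total mass bound Q(E) − νₙ(E) ≤ 2^{-n}). Let hₙ = dνₙ/dQ and let μₙ be the measure with density inf_{i ≥ n} hᵢ with respect to Q. Then 0 ≤ Q − μₙ and (Q − μₙ)(E) ≤ 2^{-n+1}; in particular μ₁ ≤ μ₂ ≤ … and μₙ(A) ↑ Q(A) for every measurable set A. -/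
open MeasureTheory Filter
open scoped ENNReal

/-!
Each density `hᵢ = dνᵢ/dQ` is at most `1`, and `∫ (1 - hᵢ) dQ = Q(E) - νᵢ(E) ≤ 2⁻ⁱ`. Since
`1 - ⨅ᵢ hᵢ = ⨆ᵢ (1 - hᵢ) ≤ ∑ᵢ (1 - hᵢ)`, the infimum over the tail `i ≥ n` loses at most
`∑_{i ≥ n} 2⁻ⁱ = 2 · 2⁻ⁿ` of mass. A measure below `Q` whose total mass is within `ε` of `Q(E)`
is within `ε` of `Q` on every measurable set, which gives the convergence.
-/

theorem iInf_subtype_le_eq_iInf_add {α : Type*} [CompleteLattice α] (u : ℕ → α) (n : ℕ) :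
    ⨅ i : {i : ℕ // n ≤ i}, u i = ⨅ k, u (k + n) := by
  rw [← iInf_ge_eq_iInf_nat_add, iInf_subtype']

theorem ENNReal.tsum_geometric_inv_two_add (n : ℕ) :
    ∑' k, (2⁻¹ : ℝ≥0∞) ^ (k + n) = 2 * 2⁻¹ ^ n := by
  simp only [pow_add, ENNReal.tsum_mul_right, ENNReal.tsum_geometric, ENNReal.one_sub_inv_two,
    inv_inv]

theorem ENNReal.tendsto_two_mul_inv_two_pow :
    Tendsto (fun n : ℕ => 2 * (2⁻¹ : ℝ≥0∞) ^ n) atTop (nhds 0) := by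
  simpa using ENNReal.Tendsto.const_mul
    (ENNReal.tendsto_pow_atTop_nhds_zero_of_lt_one (ENNReal.inv_lt_one.2 ENNReal.one_lt_two))
    (.inr ENNReal.ofNat_ne_top)

namespace MeasureTheory

variable {E : Type*} [MeasurableSpace E] {Q : Measure E}

theorem withDensity_le_self {f : E → ℝ≥0∞} (hf : f ≤ᵐ[Q] 1) : Q.withDensity f ≤ Q :=
  (withDensity_mono hf).trans_eq withDensity_one

theorem lintegral_one_sub_rnDeriv [IsFiniteMeasure Q] {ν : Measure E} (hνQ : ν ≤ Q) :
    ∫⁻ x, 1 - ν.rnDeriv Q x ∂Q = Q Set.univ - ν Set.univ := by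
  have : IsFiniteMeasure ν := isFiniteMeasure_of_le Q hνQ
  have hν : ∫⁻ x, ν.rnDeriv Q x ∂Q = ν Set.univ :=
    Measure.lintegral_rnDeriv (Measure.absolutelyContinuous_of_le hνQ)
  rw [lintegral_sub (f := fun _ => 1) (Measure.measurable_rnDeriv _ _) (hν ▸ measure_ne_top ν _)
    (Measure.rnDeriv_le_one_of_le hνQ), lintegral_one, hν]

theorem measure_univ_le_withDensity_add (f : E → ℝ≥0∞) (hf : AEMeasurable f Q) :
    Q Set.univ ≤ Q.withDensity f Set.univ + ∫⁻ x, 1 - f x ∂Q :=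
  calc Q Set.univ = ∫⁻ _, 1 ∂Q := lintegral_one.symm
    _ ≤ ∫⁻ x, f x + (1 - f x) ∂Q := lintegral_mono fun _ => le_add_tsub
    _ = Q.withDensity f Set.univ + ∫⁻ x, 1 - f x ∂Q := by
      rw [lintegral_add_left' hf, withDensity_apply _ MeasurableSet.univ, Measure.restrict_univ]

theorem lintegral_one_sub_iInf_le_tsum {ι : Type*} [Countable ι] {g : ι → E → ℝ≥0∞}
    (hg : ∀ i, AEMeasurable (g i) Q) :
    ∫⁻ x, 1 - ⨅ i, g i x ∂Q ≤ ∑' i, ∫⁻ x, 1 - g i x ∂Q :=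
  calc ∫⁻ x, 1 - ⨅ i, g i x ∂Q = ∫⁻ x, ⨆ i, (1 - g i x) ∂Q := by simp only [ENNReal.sub_iInf]
    _ ≤ ∫⁻ x, ∑' i, (1 - g i x) ∂Q := lintegral_mono fun _ => iSup_le ENNReal.le_tsum
    _ = ∑' i, ∫⁻ x, 1 - g i x ∂Q := lintegral_tsum fun i => aemeasurable_const.sub (hg i)

theorem measure_univ_le_withDensity_iInf_rnDeriv_add_tsum [IsFiniteMeasure Q] {ι : Type*}
    [Countable ι] {ν : ι → Measure E} (hνQ : ∀ i, ν i ≤ Q) :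
    Q Set.univ ≤ Q.withDensity (fun x => ⨅ i, (ν i).rnDeriv Q x) Set.univ +
      ∑' i, (Q Set.univ - ν i Set.univ) := by
  have hmeas : ∀ i, Measurable ((ν i).rnDeriv Q) := fun i => Measure.measurable_rnDeriv _ _
  refine (measure_univ_le_withDensity_add _ (Measurable.iInf hmeas).aemeasurable).trans ?_
  gcongr
  simpa only [lintegral_one_sub_rnDeriv (hνQ _)] using
    lintegral_one_sub_iInf_le_tsum (Q := Q) fun i => (hmeas i).aemeasurable

theorem measure_le_add_of_measure_univ_le_add [IsFiniteMeasure Q] {μ : Measure E} (hμQ : μ ≤ Q)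
    {ε : ℝ≥0∞} (hε : Q Set.univ ≤ μ Set.univ + ε) {A : Set E} (hA : MeasurableSet A) :
    Q A ≤ μ A + ε := by
  have : IsFiniteMeasure μ := isFiniteMeasure_of_le Q hμQ
  rw [← tsub_le_iff_left, ← Measure.sub_apply hA hμQ]
  calc (Q - μ) A ≤ (Q - μ) Set.univ := measure_mono (Set.subset_univ A)
    _ = Q Set.univ - μ Set.univ := Measure.sub_apply MeasurableSet.univ hμQ
    _ ≤ ε := tsub_le_iff_left.mpr hε

theorem tendsto_measure_of_measure_univ_le_add [IsFiniteMeasure Q] {μ : ℕ → Measure E}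
    (hμQ : ∀ n, μ n ≤ Q) {ε : ℕ → ℝ≥0∞} (hε : Tendsto ε atTop (nhds 0))
    (hmass : ∀ n, Q Set.univ ≤ μ n Set.univ + ε n) {A : Set E} (hA : MeasurableSet A) :
    Tendsto (fun n => μ n A) atTop (nhds (Q A)) := by
  have hlower : Tendsto (fun n => Q A - ε n) atTop (nhds (Q A)) := by
    simpa using ENNReal.Tendsto.sub tendsto_const_nhds hε (Or.inl (measure_ne_top Q A))
  refine tendsto_of_tendsto_of_tendsto_of_le_of_le hlower tendsto_const_nhds (fun n => ?_)
    (fun n => hμQ n A)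
  exact tsub_le_iff_right.mpr (measure_le_add_of_measure_univ_le_add (hμQ n) (hmass n) hA)

end MeasureTheory

/-- If `νₙ ≤ Q` with `Q(E) − νₙ(E) ≤ 2⁻ⁿ`, and `μₙ` has density `inf_{i ≥ n} dνᵢ/dQ`
with respect to `Q`, then `μₙ ≤ Q`, `(Q − μₙ)(E) ≤ 2^{-n+1}`, the `μₙ` increase,
and `μₙ(A) ↑ Q(A)` for every measurable `A`. -/
theorem stmt6 {E : Type*} [MeasurableSpace E]
    (Q : Measure E) [IsProbabilityMeasure Q]
    (ν : ℕ → Measure E)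
    (hle : ∀ n, ∀ A : Set E, MeasurableSet A → ν n A ≤ Q A)
    (hmass : ∀ n, Q Set.univ ≤ ν n Set.univ + 2⁻¹ ^ n)
    (μ : ℕ → Measure E)
    (hμ : ∀ n, μ n = Q.withDensity (fun x => ⨅ i : {i : ℕ // n ≤ i}, ((ν i).rnDeriv Q) x)) :
    (∀ n, ∀ A : Set E, MeasurableSet A → μ n A ≤ Q A) ∧
    (∀ n, Q Set.univ ≤ μ n Set.univ + 2 * 2⁻¹ ^ n) ∧
    (∀ n, ∀ A : Set E, MeasurableSet A → μ n A ≤ μ (n + 1) A) ∧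
    (∀ A : Set E, MeasurableSet A → Tendsto (fun n => μ n A) atTop (nhds (Q A))) := by
  have hνQ : ∀ n, ν n ≤ Q := fun n => Measure.le_iff.mpr (hle n)
  replace hμ : ∀ n, μ n = Q.withDensity (fun x => ⨅ k, (ν (k + n)).rnDeriv Q x) := fun n => by
    rw [hμ n]
    congr with x
    exact iInf_subtype_le_eq_iInf_add (fun i => (ν i).rnDeriv Q x) n
  have hμQ : ∀ n, μ n ≤ Q := fun n => hμ n ▸ withDensity_le_self <| by
    filter_upwards [Measure.rnDeriv_le_one_of_le (hνQ (0 + n))] with x hx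
    exact (iInf_le _ 0).trans hx
  have hμmass : ∀ n, Q Set.univ ≤ μ n Set.univ + 2 * 2⁻¹ ^ n := fun n =>
    calc Q Set.univ ≤ μ n Set.univ + ∑' k, (Q Set.univ - ν (k + n) Set.univ) :=
          hμ n ▸ measure_univ_le_withDensity_iInf_rnDeriv_add_tsum fun k => hνQ (k + n)
      _ ≤ μ n Set.univ + ∑' k, 2⁻¹ ^ (k + n) := by
          gcongr with k
          exact tsub_le_iff_left.mpr (hmass (k + n))
      _ = μ n Set.univ + 2 * 2⁻¹ ^ n := by rw [ENNReal.tsum_geometric_inv_two_add]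
  have hμmono : ∀ n, μ n ≤ μ (n + 1) := fun n => by
    rw [hμ, hμ]
    exact withDensity_mono <| ae_of_all _ fun x =>
      iInf_mono' fun k => ⟨k + 1, by rw [add_right_comm, add_assoc]⟩
  exact ⟨fun n => Measure.le_iff.mp (hμQ n), hμmass, fun n => Measure.le_iff.mp (hμmono n),
    fun A hA => tendsto_measure_of_measure_univ_le_add hμQ ENNReal.tendsto_two_mul_inv_two_pow hμmass hA⟩
end

section
/- Let Q be a probability measure on (E,𝓔), and ν₁, …, ν_m measures with νᵢ ≤ Q and densities hᵢ = dνᵢ/dQ. Let μ be the measure with density min_{1 ≤ i ≤ m} hᵢ with respect to Q. Then there exists a measurable partition A₁, …, A_m of E such that μ(B ∩ Aᵢ) = νᵢ(B ∩ Aᵢ) for all measurable B and each i, and consequently (Q − μ)(E) ≤ Σ_{i=1}^m (Q − νᵢ)(E). -/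
open MeasureTheory Filter
open scoped ENNReal

/-!
Split `E` according to which density `hᵢ = dνᵢ/dQ` is the smallest, breaking ties by taking the
least index. On the `i`-th piece `min_j hⱼ = hᵢ`, so `μ` and `νᵢ` agree there. Since `νᵢ ≤ Q`,
the defect `Q(Aᵢ) - νᵢ(Aᵢ) = (Q - νᵢ)(Aᵢ)` is at most `(Q - νᵢ)(E)`, and summing over the pieces
gives the bound on `Q(E) - μ(E)`.
-/

section ArgminSet

variable {ι E α : Type*}

def argminSet [LE α] (h : ι → E → α) (i : ι) : Set E := {x | ∀ j, h i x ≤ h j x}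

theorem iUnion_argminSet [LinearOrder α] [Finite ι] [Nonempty ι] (h : ι → E → α) :
    ⋃ i, argminSet h i = Set.univ :=
  Set.eq_univ_of_forall fun x => Set.mem_iUnion.mpr (Finite.exists_min fun i => h i x)

theorem iInf_eq_of_mem_argminSet [CompleteLattice α] {h : ι → E → α} {i : ι} {x : E}
    (hx : x ∈ argminSet h i) : ⨅ j, h j x = h i x :=
  le_antisymm (iInf_le _ i) (le_iInf hx)

theorem measurableSet_argminSet [Countable ι] [MeasurableSpace E] [TopologicalSpace α]
    [LinearOrder α] [OrderClosedTopology α] [SecondCountableTopology α] [MeasurableSpace α]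
    [OpensMeasurableSpace α] {h : ι → E → α} (hh : ∀ i, Measurable (h i)) (i : ι) :
    MeasurableSet (argminSet h i) := by
  simp only [argminSet, Set.ofPred_forall]
  exact MeasurableSet.iInter fun j => measurableSet_le (hh i) (hh j)

end ArgminSet

theorem measurableSet_disjointed {ι E : Type*} [MeasurableSpace E] [Countable ι] [Preorder ι]
    [LocallyFiniteOrderBot ι] {f : ι → Set E} (hf : ∀ i, MeasurableSet (f i)) (i : ι) :
    MeasurableSet (disjointed f i) := by
  rw [disjointed_eq_inter_compl]
  exact (hf i).inter (MeasurableSet.biInter (Set.to_countable _) fun j _ => (hf j).compl)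

namespace MeasureTheory.Measure

variable {E ι : Type*} [MeasurableSpace E] {Q : Measure E}

theorem withDensity_iInf_rnDeriv_apply_of_subset_argminSet [Countable ι] {ν : ι → Measure E}
    [∀ i, (ν i).HaveLebesgueDecomposition Q] (hac : ∀ i, ν i ≪ Q) {i : ι} {s : Set E}
    (hs : MeasurableSet s) (hsub : s ⊆ argminSet (fun j => (ν j).rnDeriv Q) i) :
    Q.withDensity (fun x => ⨅ j, (ν j).rnDeriv Q x) s = ν i s := by
  conv_rhs => rw [← withDensity_rnDeriv_eq _ _ (hac i)]
  rw [withDensity_apply _ hs, withDensity_apply _ hs]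
  exact setLIntegral_congr_fun hs fun x hx => iInf_eq_of_mem_argminSet (hsub hx)

theorem apply_le_add_tsub_of_le [IsFiniteMeasure Q] {ν : Measure E} (hνQ : ν ≤ Q) {s : Set E}
    (hs : MeasurableSet s) : Q s ≤ ν s + (Q Set.univ - ν Set.univ) := by
  have : IsFiniteMeasure ν := isFiniteMeasure_of_le Q hνQ
  calc Q s ≤ ν s + (Q s - ν s) := le_add_tsub
    _ = ν s + (Q - ν) s := by rw [sub_apply hs hνQ]
    _ ≤ ν s + (Q - ν) Set.univ := by gcongr; exact Set.subset_univ s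
    _ = ν s + (Q Set.univ - ν Set.univ) := by rw [sub_apply MeasurableSet.univ hνQ]

end MeasureTheory.Measure

/-- If `ν₁, …, ν_m ≤ Q` and `μ` has density `min_i dνᵢ/dQ` w.r.t. `Q`, then there
is a measurable partition `A₁, …, A_m` of `E` with `μ(B ∩ Aᵢ) = νᵢ(B ∩ Aᵢ)` for
all measurable `B`, and consequently `(Q − μ)(E) ≤ Σᵢ (Q − νᵢ)(E)`. -/
theorem stmt8 {E : Type*} [MeasurableSpace E]
    (Q : Measure E) [IsProbabilityMeasure Q]
    (m : ℕ) (hm : 1 ≤ m) (ν : Fin m → Measure E)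
    (hle : ∀ i, ∀ A : Set E, MeasurableSet A → ν i A ≤ Q A)
    (μ : Measure E)
    (hμ : μ = Q.withDensity (fun x => ⨅ i : Fin m, ((ν i).rnDeriv Q) x)) :
    (∃ A : Fin m → Set E,
      (∀ i, MeasurableSet (A i)) ∧
      Pairwise (Function.onFun Disjoint A) ∧
      (⋃ i, A i) = Set.univ ∧
      (∀ i, ∀ B : Set E, MeasurableSet B → μ (B ∩ A i) = ν i (B ∩ A i))) ∧
    Q Set.univ ≤ μ Set.univ + ∑ i : Fin m, (Q Set.univ - ν i Set.univ) := by
  have : Nonempty (Fin m) := ⟨⟨0, hm⟩⟩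
  have hνQ i : ν i ≤ Q := Measure.le_iff.mpr (hle i)
  have (i : Fin m) : IsFiniteMeasure (ν i) := isFiniteMeasure_of_le Q (hνQ i)
  set A := disjointed (argminSet fun i => (ν i).rnDeriv Q)
  have hAmeas : ∀ i, MeasurableSet (A i) :=
    measurableSet_disjointed (measurableSet_argminSet fun i => Measure.measurable_rnDeriv _ _)
  have hcover : ⋃ i, A i = Set.univ := by rw [iUnion_disjointed, iUnion_argminSet]
  have hμA i B (hB : MeasurableSet B) : μ (B ∩ A i) = ν i (B ∩ A i) := by
    rw [hμ]
    exact Measure.withDensity_iInf_rnDeriv_apply_of_subset_argminSet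
      (fun j => Measure.absolutelyContinuous_of_le (hνQ j)) (hB.inter (hAmeas i))
      (Set.inter_subset_right.trans (disjointed_subset _ i))
  refine ⟨⟨A, hAmeas, disjoint_disjointed _, hcover, hμA⟩, ?_⟩
  have hsum (ρ : Measure E) : ρ Set.univ = ∑ i, ρ (A i) := by
    rw [← hcover, measure_iUnion (disjoint_disjointed _) hAmeas, tsum_fintype]
  calc Q Set.univ = ∑ i, Q (A i) := hsum Q
    _ ≤ ∑ i, (ν i (A i) + (Q Set.univ - ν i Set.univ)) :=
      Finset.sum_le_sum fun i _ => Measure.apply_le_add_tsub_of_le (hνQ i) (hAmeas i)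
    _ = μ Set.univ + ∑ i, (Q Set.univ - ν i Set.univ) := by
      rw [Finset.sum_add_distrib, hsum μ]
      congr 2 with i
      simpa using (hμA i _ MeasurableSet.univ).symm
end

section
/- Let (Hᵗ, 𝓗ᵗ), t ∈ [0,∞), be the time-window projections of a path space (H, 𝓗), and let Z₁, Z₂, …, Z be random elements in (H, 𝓗). Suppose there exist numbers 0 ≤ t₁ ≤ t₂ ≤ … → ∞, a coupling (Ẑ₁^{t₁}, Ẑ₂^{t₂}, …, Ẑ) of the window segments Z₁^{t₁}, Z₂^{t₂}, …, Z, and an ℕ-valued random variable N with Ẑₙ^{tₙ} = Ẑ^{tₙ} for all n ≥ N. Then for every t ∈ [0,∞), Zₙᵗ → Zᵗ in density as n → ∞. -/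
/-! Fix a window `s` and let `νₙ` be the law of `Ẑˢ` on the event `{N ≤ n}`. These
sub-probability measures increase to the law of `Zˢ`, and once `tₙ ≥ s` the coupling gives
`νₙ ≤` law of `Zₙˢ`. With respect to a common finite dominating measure, the densities of the
`νₙ` therefore increase to the density `g` of `Zˢ` while staying below the densities `fₙ` of
`Zₙˢ`, so `g ≤ liminf fₙ`; Fatou's lemma gives `∫ liminf fₙ ≤ 1 = ∫ g`, forcing equality
almost everywhere. -/

open MeasureTheory Filter
open scoped ENNReal

/-- `μs n → μ` in density: w.r.t. some σ-finite dominating measure, the liminf of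
the densities of the `μs n` equals the density of `μ` almost everywhere. -/
def ConvInDensity {α : Type*} [MeasurableSpace α] (μs : ℕ → Measure α) (μ : Measure α) : Prop :=
  ∃ (lam : Measure α) (f : ℕ → α → ℝ≥0∞) (g : α → ℝ≥0∞),
    SigmaFinite lam ∧ (∀ n, Measurable (f n)) ∧ Measurable g ∧
    (∀ n, μs n = lam.withDensity (f n)) ∧ μ = lam.withDensity g ∧
    (∀ᵐ x ∂lam, liminf (fun n => f n x) atTop = g x)

open Set

namespace MeasureTheory.Measure

variable {α : Type*} [MeasurableSpace α] {μ ν lam : Measure α}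

lemma rnDeriv_le_rnDeriv_of_le [IsFiniteMeasure ν] [SigmaFinite lam]
    (h : μ ≤ ν) (hν : ν ≪ lam) : μ.rnDeriv lam ≤ᵐ[lam] ν.rnDeriv lam := by
  have : IsFiniteMeasure μ := isFiniteMeasure_of_le ν h
  refine ae_le_of_forall_setLIntegral_le_of_sigmaFinite (measurable_rnDeriv _ _)
    fun A _ _ => ?_
  rw [setLIntegral_rnDeriv (h.absolutelyContinuous.trans hν), setLIntegral_rnDeriv hν]
  exact h A

lemma ae_iSup_rnDeriv_eq_rnDeriv [IsFiniteMeasure μ] [SigmaFinite lam]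
    {ν : ℕ → Measure α} (hν_mono : Monotone ν) (hν_le : ∀ n, ν n ≤ μ)
    (hν_univ : ⨆ n, ν n univ = μ univ) (hμ : μ ≪ lam) :
    (fun x => ⨆ n, (ν n).rnDeriv lam x) =ᵐ[lam] μ.rnDeriv lam := by
  have hν_ac : ∀ n, ν n ≪ lam := fun n => (hν_le n).absolutelyContinuous.trans hμ
  have : ∀ n, IsFiniteMeasure (ν n) := fun n => isFiniteMeasure_of_le μ (hν_le n)
  have h_mono : ∀ᵐ x ∂lam, Monotone fun n => (ν n).rnDeriv lam x := by
    filter_upwards [ae_all_iff.2 fun n =>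
      rnDeriv_le_rnDeriv_of_le (hν_mono n.le_succ) (hν_ac (n + 1))] with x hx
    exact monotone_nat_of_le_succ hx
  have h_lintegral : ∫⁻ x, ⨆ n, (ν n).rnDeriv lam x ∂lam = μ univ := by
    rw [lintegral_iSup' (fun n => (measurable_rnDeriv _ _).aemeasurable) h_mono, ← hν_univ]
    simp_rw [lintegral_rnDeriv (hν_ac _)]
  refine ae_eq_of_ae_le_of_lintegral_le ?_ (h_lintegral ▸ measure_ne_top μ univ)
    (measurable_rnDeriv _ _).aemeasurable ?_
  · filter_upwards [ae_all_iff.2 fun n => rnDeriv_le_rnDeriv_of_le (hν_le n) hμ] with x hx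
    exact iSup_le hx
  · rw [h_lintegral, lintegral_rnDeriv hμ]

lemma ae_liminf_rnDeriv_eq_of_le_liminf [IsFiniteMeasure μ] [SigmaFinite lam]
    {μs : ℕ → Measure α}
    (hμs : ∀ n, μs n univ ≤ μ univ) (hμ : μ ≪ lam)
    (h : μ.rnDeriv lam ≤ᵐ[lam] fun x => liminf (fun n => (μs n).rnDeriv lam x) atTop) :
    μ.rnDeriv lam =ᵐ[lam] fun x => liminf (fun n => (μs n).rnDeriv lam x) atTop := by
  refine ae_eq_of_ae_le_of_lintegral_le h
    (by rw [lintegral_rnDeriv hμ]; exact measure_ne_top μ univ)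
    (Measurable.liminf fun n => measurable_rnDeriv _ _).aemeasurable ?_
  calc ∫⁻ x, liminf (fun n => (μs n).rnDeriv lam x) atTop ∂lam
      ≤ liminf (fun n => ∫⁻ x, (μs n).rnDeriv lam x ∂lam) atTop :=
        lintegral_liminf_le fun n => measurable_rnDeriv _ _
    _ ≤ μ univ := liminf_le_of_frequently_le'
        (.of_forall fun n => lintegral_rnDeriv_le.trans (hμs n))
    _ = ∫⁻ x, μ.rnDeriv lam x ∂lam := (lintegral_rnDeriv hμ).symm

lemma ae_rnDeriv_le_liminf_of_monotone_minorant [IsFiniteMeasure μ] [SigmaFinite lam]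
    {μs : ℕ → Measure α} [∀ n, IsFiniteMeasure (μs n)] {ν : ℕ → Measure α}
    (hν_mono : Monotone ν) (hν_le : ∀ n, ν n ≤ μ)
    (hν_univ : ⨆ n, ν n univ = μ univ) (hν_le_μs : ∀ᶠ n in atTop, ν n ≤ μs n)
    (hμ : μ ≪ lam) (hμs : ∀ n, μs n ≪ lam) :
    μ.rnDeriv lam ≤ᵐ[lam] fun x => liminf (fun n => (μs n).rnDeriv lam x) atTop := by
  obtain ⟨n₀, hn₀⟩ := eventually_atTop.1 hν_le_μs
  filter_upwards [ae_iSup_rnDeriv_eq_rnDeriv hν_mono hν_le hν_univ hμ,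
    ae_all_iff.2 fun n => ae_all_iff.2 fun m => ae_all_iff.2 fun (hm : max n n₀ ≤ m) =>
      rnDeriv_le_rnDeriv_of_le ((hν_mono (le_of_max_le_left hm)).trans
        (hn₀ m (le_of_max_le_right hm))) (hμs m)]
    with x hx h_le
  rw [← hx]
  exact iSup_le fun n => le_liminf_of_le (by isBoundedDefault)
    (eventually_atTop.2 ⟨max n n₀, h_le n⟩)

end MeasureTheory.Measure

theorem ConvInDensity.of_monotone_minorant {α : Type*} [MeasurableSpace α] {μ : Measure α}
    {μs : ℕ → Measure α} [IsProbabilityMeasure μ] [∀ n, IsProbabilityMeasure (μs n)]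
    {ν : ℕ → Measure α} (hν_mono : Monotone ν)
    (hν_le : ∀ n, ν n ≤ μ) (hν_univ : ⨆ n, ν n univ = μ univ)
    (hν_le_μs : ∀ᶠ n in atTop, ν n ≤ μs n) :
    ConvInDensity μs μ := by
  -- `toFinite` makes the s-finite measure `μ + ∑ μₙ` finite without changing its null sets.
  set lam := (μ + Measure.sum μs).toFinite
  have hμ : μ ≪ lam :=
    (Measure.le_add_right le_rfl).absolutelyContinuous.trans (absolutelyContinuous_toFinite _)
  have hμs : ∀ n, μs n ≪ lam := fun n =>
    ((Measure.le_sum μs n).trans (Measure.le_add_left le_rfl)).absolutelyContinuous.trans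
      (absolutelyContinuous_toFinite _)
  refine ⟨lam, fun n => (μs n).rnDeriv lam, μ.rnDeriv lam, inferInstance,
    fun n => Measure.measurable_rnDeriv _ _, Measure.measurable_rnDeriv _ _,
    fun n => (Measure.withDensity_rnDeriv_eq _ _ (hμs n)).symm,
    (Measure.withDensity_rnDeriv_eq _ _ hμ).symm, ?_⟩
  refine (Measure.ae_liminf_rnDeriv_eq_of_le_liminf (fun n => by simp) hμ ?_).symm
  exact Measure.ae_rnDeriv_le_liminf_of_monotone_minorant hν_mono hν_le hν_univ hν_le_μs hμ hμs

theorem stmt9_general {H : Type*} [MeasurableSpace H]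
    (Ht : ℝ → Type*) [∀ t, MeasurableSpace (Ht t)]
    (π : ∀ t : ℝ, H → Ht t) (hπ : ∀ t, Measurable (π t))
    (ρ : ∀ s t : ℝ, s ≤ t → Ht t → Ht s) (hρ : ∀ s t h, Measurable (ρ s t h))
    (hcomp : ∀ (s t : ℝ) (h : s ≤ t) (z : H), ρ s t h (π t z) = π s z)
    (Qn : ℕ → Measure H) (Q : Measure H)
    [∀ n, IsProbabilityMeasure (Qn n)] [IsProbabilityMeasure Q]
    (t : ℕ → ℝ)
    (htlim : Tendsto t atTop atTop)
    {Ω : Type*} [MeasurableSpace Ω] (Pr : Measure Ω)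
    (Zh : ∀ n, Ω → Ht (t n)) (Z : Ω → H) (N : Ω → ℕ)
    (hZh : ∀ n, Measurable (Zh n)) (hZ : Measurable Z) (hN : Measurable N)
    (hlawn : ∀ n, Pr.map (Zh n) = (Qn n).map (π (t n)))
    (hlaw : Pr.map Z = Q)
    (hcoup : ∀ᵐ ω ∂Pr, ∀ n, N ω ≤ n → Zh n ω = π (t n) (Z ω)) :
    ∀ s : ℝ, 0 ≤ s →
      ConvInDensity (fun n => (Qn n).map (π s)) (Q.map (π s)) := by
  intro s _
  have hY : Measurable (π s ∘ Z) := (hπ s).comp hZ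
  have hQ : Q.map (π s) = Pr.map (π s ∘ Z) := by rw [← hlaw, Measure.map_map (hπ s) hZ]
  have hB_mono : Monotone fun n => {ω | N ω ≤ n} :=
    fun m n hmn ω (hω : N ω ≤ m) => hω.trans hmn
  have := Measure.isProbabilityMeasure_map (μ := Q) (hπ s).aemeasurable
  have := fun n => Measure.isProbabilityMeasure_map (μ := Qn n) (hπ s).aemeasurable
  refine ConvInDensity.of_monotone_minorant
    (ν := fun n => (Pr.restrict {ω | N ω ≤ n}).map (π s ∘ Z))
    (fun m n hmn => Measure.map_mono (Measure.restrict_mono (hB_mono hmn) le_rfl) hY)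
    (fun n => hQ ▸ Measure.map_mono Measure.restrict_le_self hY) ?_ ?_
  · have hB_univ : ⋃ n, {ω | N ω ≤ n} = univ :=
      iUnion_eq_univ_iff.2 fun ω => ⟨N ω, le_refl (N ω)⟩
    simp_rw [hQ, Measure.map_apply hY MeasurableSet.univ, preimage_univ,
      Measure.restrict_apply_univ, ← hB_mono.measure_iUnion, hB_univ]
  · filter_upwards [htlim.eventually_ge_atTop s] with n hsn
    have hQn : (Qn n).map (π s) = Pr.map (ρ s (t n) hsn ∘ Zh n) := by
      rw [← Measure.map_map (hρ _ _ _) (hZh n), hlawn n, Measure.map_map (hρ _ _ _) (hπ _)]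
      exact congrArg (Measure.map · (Qn n)) (funext fun z => (hcomp s (t n) hsn z).symm)
    have h_coupled : π s ∘ Z =ᵐ[Pr.restrict {ω | N ω ≤ n}] ρ s (t n) hsn ∘ Zh n := by
      filter_upwards [ae_restrict_of_ae hcoup, ae_restrict_mem (hN measurableSet_Iic)]
        with ω hω hωn
      simp [hω n hωn, hcomp]
    rw [hQn, Measure.map_congr h_coupled]
    exact Measure.map_mono Measure.restrict_le_self ((hρ _ _ _).comp (hZh n))

/-- If there exist times `tₙ ↑ ∞` and a coupling `(Ẑ₁^{t₁}, Ẑ₂^{t₂}, …, Ẑ)` of the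
window segments with `Ẑₙ^{tₙ} = Ẑ^{tₙ}` for `n ≥ N`, then `Zₙᵗ → Zᵗ` in density
for every finite time window `t`. Here `π t : H → Hᵗ` are the window projections
and `ρ s t : Hᵗ → Hˢ` (for `s ≤ t`) the connecting restrictions. -/
theorem stmt9 {H : Type*} [MeasurableSpace H]
    (Ht : ℝ → Type*) [∀ t, MeasurableSpace (Ht t)]
    (π : ∀ t : ℝ, H → Ht t) (hπ : ∀ t, Measurable (π t))
    (ρ : ∀ s t : ℝ, s ≤ t → Ht t → Ht s) (hρ : ∀ s t h, Measurable (ρ s t h))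
    (hcomp : ∀ (s t : ℝ) (h : s ≤ t) (z : H), ρ s t h (π t z) = π s z)
    (Qn : ℕ → Measure H) (Q : Measure H)
    [∀ n, IsProbabilityMeasure (Qn n)] [IsProbabilityMeasure Q]
    (t : ℕ → ℝ) (ht0 : ∀ n, 0 ≤ t n) (htmono : Monotone t)
    (htlim : Tendsto t atTop atTop)
    {Ω : Type*} [MeasurableSpace Ω] (Pr : Measure Ω) [IsProbabilityMeasure Pr]
    (Zh : ∀ n, Ω → Ht (t n)) (Z : Ω → H) (N : Ω → ℕ)
    (hZh : ∀ n, Measurable (Zh n)) (hZ : Measurable Z) (hN : Measurable N)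
    (hlawn : ∀ n, Pr.map (Zh n) = (Qn n).map (π (t n)))
    (hlaw : Pr.map Z = Q)
    (hcoup : ∀ᵐ ω ∂Pr, ∀ n, N ω ≤ n → Zh n ω = π (t n) (Z ω)) :
    ∀ s : ℝ, 0 ≤ s →
      ConvInDensity (fun n => (Qn n).map (π s)) (Q.map (π s)) :=
  stmt9_general Ht π hπ ρ hρ hcomp Qn Q t htlim Pr Zh Z N hZh hZ hN hlawn hlaw hcoup
end

section
/- Let Z₁, Z₂, …, Z be random elements in a path space (H, 𝓗) over time [0,∞]. If Zₙᵗ → Zᵗ in density as n → ∞ for every t ∈ [0,∞), then there exist numbers 0 ≤ t₁ ≤ t₂ ≤ … → ∞, a coupling (Ẑ₁^{t₁}, Ẑ₂^{t₂}, …, Ẑ) of Z₁^{t₁}, Z₂^{t₂}, …, Z, and an ℕ-valued random variable N such that Ẑₙ^{tₙ} = Ẑ^{tₙ} for all n ≥ N. -/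
/-!
Convergence in density at the integer time `j` yields sub-densities
`r j m ≤ d(Qₘ ∘ πⱼ⁻¹)/d(Q ∘ πⱼ⁻¹)` (the overlap `min(fₘ, g)/g`) tending to `1` almost surely.
A Borel–Cantelli diagonal argument picks times `J m → ∞` along which `r (J m) m ∘ π_{J m} → 1`
still holds `Q`-a.s., so their running infima `φₙ` increase to `1`. Draw `Z ∼ Q` and a level `N`
with `P(N ≤ n | Z) = φₙ(Z)`; on `{N ≤ n}` put `Ẑₙ = π_{J n} Z`, and otherwise draw `Ẑₙ`
independently from the normalised remainder of the law of `Zₙ^{J n}` after removing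
`(φₙ Q) ∘ π_{J n}⁻¹`, which it dominates.
-/

open MeasureTheory Filter
open scoped ENNReal

open Set
open scoped NNReal Topology

theorem ENNReal.tendsto_min_div_of_liminf_eq {a : ℕ → ℝ≥0∞} {b : ℝ≥0∞}
    (ha : liminf a atTop = b) (hb0 : b ≠ 0) (hbtop : b ≠ ∞) :
    Tendsto (fun m => min (a m) b / b) atTop (𝓝 1) := by
  have hmin : Tendsto (fun m => min (a m) b) atTop (𝓝 b) := by
    refine tendsto_order.2 ⟨fun c hc => ?_, fun c hc => Eventually.of_forall fun m =>
      (min_le_right _ _).trans_lt hc⟩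
    filter_upwards [eventually_lt_of_lt_liminf (ha ▸ hc)] with m hm
    exact lt_min hm hc
  simpa [ENNReal.div_self hb0 hbtop] using ENNReal.Tendsto.div_const (b := b) hmin (Or.inl hb0)

-- `ℝ≥0`-valued because `ℝ≥0∞` carries no extended metric, which `exists_diagonal_tendsto_ae` needs.
theorem ConvInDensity.exists_tendsto_ae_one {β : Type*} [MeasurableSpace β]
    {μs : ℕ → Measure β} {μ : Measure β} [IsFiniteMeasure μ] (h : ConvInDensity μs μ) :
    ∃ r : ℕ → β → ℝ≥0, (∀ m, Measurable (r m)) ∧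
      (∀ m, μ.withDensity (fun y => r m y) ≤ μs m) ∧
      ∀ᵐ y ∂μ, Tendsto (fun m => r m y) atTop (𝓝 1) := by
  obtain ⟨lam, f, g, -, hf, hg, hμs, rfl, hlim⟩ := h
  have hratio : ∀ m, Measurable fun y => min (f m y) (g y) / g y :=
    fun m => ((hf m).min hg).div hg
  refine ⟨fun m y => (min (f m y) (g y) / g y).toNNReal, fun m => (hratio m).ennreal_toNNReal,
    fun m => ?_, ?_⟩
  · rw [hμs m, ← withDensity_mul lam hg (hratio m).ennreal_toNNReal.coe_nnreal_ennreal]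
    exact withDensity_mono (ae_of_all _ fun y =>
      (mul_le_mul_right ENNReal.coe_toNNReal_le_self _).trans
        (ENNReal.mul_div_le.trans (min_le_left _ _)))
  · have hg_fin : ∀ᵐ y ∂lam, g y < ∞ := by
      refine ae_lt_top hg ?_
      simpa [withDensity_apply _ MeasurableSet.univ] using
        measure_ne_top (lam.withDensity g) univ
    rw [ae_withDensity_iff hg]
    filter_upwards [hlim, hg_fin] with y hy hy_fin hy0
    exact (ENNReal.tendsto_toNNReal ENNReal.one_ne_top).comp
      (ENNReal.tendsto_min_div_of_liminf_eq hy hy0 hy_fin.ne)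

theorem map_withDensity_comp {α β : Type*} [MeasurableSpace α] [MeasurableSpace β]
    (μ : Measure α) {p : α → β} (hp : Measurable p) {r : β → ℝ≥0∞} (hr : Measurable r) :
    (μ.withDensity (r ∘ p)).map p = (μ.map p).withDensity r := by
  ext A hA
  rw [Measure.map_apply hp hA, withDensity_apply _ hA, withDensity_apply _ (hp hA),
    setLIntegral_map hA hr hp]
  rfl

theorem Nat.exists_monotone_tendsto_atTop_eventually_le (N : ℕ → ℕ) :
    ∃ J : ℕ → ℕ, Monotone J ∧ Tendsto J atTop atTop ∧ ∀ᶠ m in atTop, N (J m) ≤ m := by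
  classical
  let P : ℕ → ℕ → Prop := fun m j => ∀ i ≤ j, N i ≤ m
  refine ⟨fun m => Nat.findGreatest (P m) m, fun a b hab => ?_, ?_, ?_⟩
  · exact Nat.findGreatest_mono (fun j hj i hi => (hj i hi).trans hab) hab
  · refine tendsto_atTop_atTop.2 fun j => ⟨j + ∑ i ∈ Finset.range (j + 1), N i, fun m hm => ?_⟩
    refine Nat.le_findGreatest (by omega) fun i hi => ?_
    have : N i ≤ ∑ k ∈ Finset.range (j + 1), N k :=
      Finset.single_le_sum (fun k _ => Nat.zero_le (N k)) (Finset.mem_range_succ_iff.2 hi)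
    omega
  · filter_upwards [eventually_ge_atTop (N 0)] with m hm
    exact Nat.findGreatest_spec (P := P m) (Nat.zero_le m)
      (fun i hi => by rwa [Nat.le_zero.1 hi]) _ le_rfl

theorem exists_diagonal_tendsto_ae {α E : Type*} [MeasurableSpace α] [PseudoEMetricSpace E]
    [MeasurableSpace E] [OpensMeasurableSpace E] [SecondCountableTopology E]
    {μ : Measure α} [IsFiniteMeasure μ] {f : ℕ → ℕ → α → E} {g : α → E}
    (hf : ∀ j m, Measurable (f j m)) (hg : Measurable g)
    (hlim : ∀ j, ∀ᵐ x ∂μ, Tendsto (fun m => f j m x) atTop (𝓝 (g x))) :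
    ∃ J : ℕ → ℕ, Monotone J ∧ Tendsto J atTop atTop ∧
      ∀ᵐ x ∂μ, Tendsto (fun m => f (J m) m x) atTop (𝓝 (g x)) := by
  set ε : ℕ → ℝ≥0∞ := fun j => 2⁻¹ ^ j
  have hε : Tendsto ε atTop (𝓝 0) := ENNReal.tendsto_pow_atTop_nhds_zero_of_lt_one (by simp)
  have hε_pos : ∀ j, 0 < ε j := fun j => ENNReal.pow_pos (by simp) j
  set bad : ℕ → ℕ → Set α := fun j n => ⋃ m ≥ n, {x | ε j ≤ edist (f j m x) (g x)}
  have hbad_small : ∀ j, Tendsto (fun n => μ (bad j n)) atTop (𝓝 0) := by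
    intro j
    have hnull : μ (⋂ n, bad j n) = 0 := by
      refine measure_mono_null (fun x hx => ?_) (ae_iff.1 (hlim j))
      intro hconv
      obtain ⟨n, hn⟩ := (EMetric.tendsto_atTop.1 hconv) (ε j) (hε_pos j)
      obtain ⟨m, hm, hxm⟩ := mem_iUnion₂.1 (mem_iInter.1 hx n)
      exact (hn m hm).not_ge hxm
    rw [← hnull]
    refine tendsto_measure_iInter_atTop (fun n => ?_) (fun a b hab => ?_) ⟨0, measure_ne_top _ _⟩
    · exact (MeasurableSet.biUnion (to_countable _) fun m _ =>
        measurableSet_le measurable_const ((hf j m).edist hg)).nullMeasurableSet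
    · exact biUnion_subset_biUnion_left fun m hm => le_trans hab hm
  -- Borel–Cantelli: a.e. `x` lies in only finitely many of the sets `bad j (N j)`.
  choose N hN using fun j => ((hbad_small j).eventually (gt_mem_nhds (hε_pos j))).exists
  obtain ⟨J, hJmono, hJtop, hJN⟩ := Nat.exists_monotone_tendsto_atTop_eventually_le N
  refine ⟨J, hJmono, hJtop, ?_⟩
  have hsum : ∑' j, μ (bad j (N j)) ≠ ∞ :=
    ne_top_of_le_ne_top (by simp [ε, ENNReal.tsum_geometric])
      (ENNReal.tsum_le_tsum fun j => (hN j).le)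
  filter_upwards [ae_eventually_notMem hsum] with x hx
  rw [tendsto_iff_edist_tendsto_0]
  refine tendsto_of_tendsto_of_tendsto_of_le_of_le' tendsto_const_nhds (hε.comp hJtop)
    (Eventually.of_forall fun _ => zero_le) ?_
  filter_upwards [hJtop.eventually hx, hJN] with m hm hmN
  exact (not_le.1 fun h => hm (mem_iUnion₂.2 ⟨m, hmN, h⟩)).le

def increment {M : Type*} [Sub M] (φ : ℕ → M) : ℕ → M
  | 0 => φ 0
  | k + 1 => φ (k + 1) - φ k

theorem sum_range_succ_increment {M : Type*} [AddCommMonoid M] [PartialOrder M] [Sub M]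
    [OrderedSub M] [AddLeftMono M] [ExistsAddOfLE M]
    {φ : ℕ → M} (hφ : Monotone φ) (n : ℕ) :
    ∑ k ∈ Finset.range (n + 1), increment φ k = φ n := by
  induction n with
  | zero => simp [increment]
  | succ n ih => rw [Finset.sum_range_succ, ih, increment, add_tsub_cancel_of_le (hφ n.le_succ)]

theorem map_ite_prod {β Y X : Type*} [MeasurableSpace β] [MeasurableSpace Y] [MeasurableSpace X]
    (γ : Measure β) [SFinite γ] (ν : Measure Y) [IsProbabilityMeasure ν] {S : Set β}
    [DecidablePred (· ∈ S)] (hS : MeasurableSet S) {f : β → X} (hf : Measurable f)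
    {g : Y → X} (hg : Measurable g) :
    (γ.prod ν).map (fun ω => if ω.1 ∈ S then f ω.1 else g ω.2) =
      (γ.restrict S).map f + γ Sᶜ • ν.map g := by
  have hF : Measurable fun ω : β × Y => if ω.1 ∈ S then f ω.1 else g ω.2 :=
    Measurable.ite (measurable_fst hS) (hf.comp measurable_fst) (hg.comp measurable_snd)
  ext A hA
  have hpre : (fun ω : β × Y => if ω.1 ∈ S then f ω.1 else g ω.2) ⁻¹' A =
      (f ⁻¹' A ∩ S) ×ˢ univ ∪ Sᶜ ×ˢ (g ⁻¹' A) := by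
    ext ω
    by_cases h : ω.1 ∈ S <;> simp [h]
  have hdisj : Disjoint ((f ⁻¹' A ∩ S) ×ˢ (univ : Set Y)) (Sᶜ ×ˢ (g ⁻¹' A)) :=
    Set.disjoint_prod.2 (Or.inl (disjoint_compl_right.mono_left inter_subset_right))
  rw [Measure.map_apply hF hA, hpre, measure_union hdisj (hS.compl.prod (hg hA)),
    Measure.prod_prod, Measure.prod_prod, measure_univ, mul_one, Measure.add_apply,
    Measure.map_apply hf hA, Measure.restrict_apply (hf hA), Measure.smul_apply,
    Measure.map_apply hg hA, smul_eq_mul]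

section CdfLift

variable {α : Type*} [MeasurableSpace α] {μ : Measure α} {φ : ℕ → α → ℝ≥0∞}

theorem measurable_increment (hφ : ∀ n, Measurable (φ n)) : ∀ k, Measurable (increment φ k)
  | 0 => hφ 0
  | k + 1 => (hφ (k + 1)).sub (hφ k)

/-- The law of `(N, Z)` when `Z ∼ μ` and `P(N ≤ n | Z) = φ n Z`. -/
noncomputable def MeasureTheory.Measure.cdfLift (μ : Measure α) (φ : ℕ → α → ℝ≥0∞) :
    Measure (ℕ × α) :=
  Measure.sum fun k => (μ.withDensity (increment φ k)).map (Prod.mk k)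

theorem cdfLift_restrict_map_snd (hφ : ∀ n, Measurable (φ n)) (hmono : Monotone φ) (n : ℕ) :
    ((μ.cdfLift φ).restrict {x | x.1 ≤ n}).map Prod.snd = μ.withDensity (φ n) := by
  ext B hB
  have hS : MeasurableSet (Prod.snd ⁻¹' B ∩ {x : ℕ × α | x.1 ≤ n}) :=
    (measurable_snd hB).inter (measurable_fst measurableSet_Iic)
  have hterm : ∀ k, ((μ.withDensity (increment φ k)).map (Prod.mk k))
      (Prod.snd ⁻¹' B ∩ {x | x.1 ≤ n}) =
      if k ≤ n then ∫⁻ z in B, increment φ k z ∂μ else 0 := by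
    intro k
    have hpre : Prod.mk k ⁻¹' (Prod.snd ⁻¹' B ∩ {x | x.1 ≤ n}) = if k ≤ n then B else ∅ := by
      ext z
      split_ifs with hk <;> simp [hk]
    rw [Measure.map_apply measurable_prodMk_left hS, hpre]
    split_ifs <;> simp [withDensity_apply _ hB]
  rw [Measure.map_apply measurable_snd hB, Measure.restrict_apply (measurable_snd hB),
    Measure.cdfLift, Measure.sum_apply _ hS, tsum_congr hterm,
    tsum_eq_sum (s := Finset.range (n + 1)) fun k hk => if_neg (by simpa using hk),
    Finset.sum_congr rfl fun k hk => if_pos (by simpa [Nat.lt_succ_iff] using hk),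
    ← lintegral_finsetSum _ fun k _ => measurable_increment hφ k, withDensity_apply _ hB]
  simp_rw [← Finset.sum_apply, sum_range_succ_increment hmono]

theorem cdfLift_map_snd (hφ : ∀ n, Measurable (φ n)) (hmono : Monotone φ)
    (hsup : ∀ᵐ z ∂μ, ⨆ n, φ n z = 1) : (μ.cdfLift φ).map Prod.snd = μ := by
  have htsum : ∀ z, ∑' k, increment φ k z = ⨆ n, φ n z := fun z => by
    rw [ENNReal.tsum_eq_iSup_nat' (tendsto_add_atTop_nat 1)]
    simp_rw [← Finset.sum_apply, sum_range_succ_increment hmono]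
  rw [Measure.cdfLift, Measure.map_sum measurable_snd.aemeasurable]
  simp_rw [Measure.map_map measurable_snd measurable_prodMk_left, Prod.snd_comp_mk, Measure.map_id]
  rw [← withDensity_tsum (measurable_increment hφ)]
  conv_rhs => rw [← withDensity_one (μ := μ)]
  refine withDensity_congr_ae ?_
  filter_upwards [hsup] with z hz
  rw [ENNReal.tsum_apply, htsum, hz]
  rfl

theorem isProbabilityMeasure_cdfLift [IsProbabilityMeasure μ] (hφ : ∀ n, Measurable (φ n))
    (hmono : Monotone φ) (hsup : ∀ᵐ z ∂μ, ⨆ n, φ n z = 1) :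
    IsProbabilityMeasure (μ.cdfLift φ) := by
  constructor
  simpa [Measure.map_apply measurable_snd MeasurableSet.univ] using
    congrArg (· univ) (cdfLift_map_snd hφ hmono hsup)

theorem cdfLift_prod_map_ite [IsProbabilityMeasure μ] (hφ : ∀ n, Measurable (φ n))
    (hmono : Monotone φ) (hsup : ∀ᵐ z ∂μ, ⨆ n, φ n z = 1) {Y X : Type*} [MeasurableSpace Y]
    [MeasurableSpace X] (ν : Measure Y) [IsProbabilityMeasure ν] {p : α → X} (hp : Measurable p)
    {g : Y → X} (hg : Measurable g) (n : ℕ) :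
    ((μ.cdfLift φ).prod ν).map (fun ω => if ω.1.1 ≤ n then p ω.1.2 else g ω.2) =
      (μ.withDensity (φ n)).map p + (1 - μ.withDensity (φ n) univ) • ν.map g := by
  have := isProbabilityMeasure_cdfLift hφ hmono hsup
  have hS : MeasurableSet {x : ℕ × α | x.1 ≤ n} := measurable_fst measurableSet_Iic
  have hrestrict := cdfLift_restrict_map_snd (μ := μ) hφ hmono n
  have hS_eq : μ.cdfLift φ {x | x.1 ≤ n} = μ.withDensity (φ n) univ := by
    simpa [Measure.map_apply measurable_snd MeasurableSet.univ] using congrArg (· univ) hrestrict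
  calc _ = (((μ.cdfLift φ).restrict {x | x.1 ≤ n}).map Prod.snd).map p +
        μ.cdfLift φ {x | x.1 ≤ n}ᶜ • ν.map g := by
        rw [Measure.map_map hp measurable_snd]
        exact map_ite_prod (μ.cdfLift φ) ν hS (hp.comp measurable_snd) hg
    _ = _ := by rw [hrestrict, prob_compl_eq_one_sub hS, hS_eq]

end CdfLift

theorem exists_isProbabilityMeasure_eq_add_smul {X : Type*} [MeasurableSpace X]
    {ν P : Measure X} [IsProbabilityMeasure P] (h : ν ≤ P) :
    ∃ ζ : Measure X, IsProbabilityMeasure ζ ∧ P = ν + (1 - ν univ) • ζ := by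
  have : IsFiniteMeasure ν := isFiniteMeasure_of_le P h
  set R := P - ν
  have hR : R univ = 1 - ν univ := by rw [Measure.sub_apply MeasurableSet.univ h, measure_univ]
  have hP : P = ν + R := (add_comm _ _ |>.trans (Measure.sub_add_cancel_of_le h)).symm
  rw [← hR]
  by_cases h0 : R univ = 0
  · refine ⟨P, inferInstance, ?_⟩
    rw [h0, zero_smul, add_zero, hP, Measure.measure_univ_eq_zero.1 h0, add_zero]
  · refine ⟨(R univ)⁻¹ • R, ⟨?_⟩, ?_⟩
    · rw [Measure.smul_apply, smul_eq_mul, ENNReal.inv_mul_cancel h0 (measure_ne_top R univ)]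
    · rw [smul_smul, ENNReal.mul_inv_cancel h0 (measure_ne_top R univ), one_smul, ← hP]

universe u v

theorem exists_coupling_eventually_eq {α : Type u} [MeasurableSpace α] {X : ℕ → Type v}
    [∀ n, MeasurableSpace (X n)] (μ : Measure α) [IsProbabilityMeasure μ]
    (P : ∀ n, Measure (X n)) [∀ n, IsProbabilityMeasure (P n)]
    {p : ∀ n, α → X n} (hp : ∀ n, Measurable (p n)) {w : ℕ → α → ℝ≥0}
    (hw : ∀ n, Measurable (w n)) (hwP : ∀ n, (μ.withDensity fun z => w n z).map (p n) ≤ P n)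
    (hlim : ∀ᵐ z ∂μ, Tendsto (fun n => w n z) atTop (𝓝 1)) :
    ∃ (Ω : Type (max u v)) (_ : MeasurableSpace Ω) (Pr : Measure Ω), IsProbabilityMeasure Pr ∧
      ∃ (Zh : ∀ n, Ω → X n) (Z : Ω → α) (N : Ω → ℕ),
        (∀ n, Measurable (Zh n)) ∧ Measurable Z ∧ Measurable N ∧
        (∀ n, Pr.map (Zh n) = P n) ∧ Pr.map Z = μ ∧
        ∀ ω n, N ω ≤ n → Zh n ω = p n (Z ω) := by
  set φ : ℕ → α → ℝ≥0∞ := fun n z => ⨅ m ≥ n, (w m z : ℝ≥0∞)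
  have hφ : ∀ n, Measurable (φ n) := fun n =>
    .iInf fun m => .iInf fun _ => (hw m).coe_nnreal_ennreal
  have hmono : Monotone φ := fun a b hab z => le_iInf₂ fun m hm => iInf₂_le m (hab.trans hm)
  have hsup : ∀ᵐ z ∂μ, ⨆ n, φ n z = 1 := by
    filter_upwards [hlim] with z hz
    have hz' : Tendsto (fun n => (w n z : ℝ≥0∞)) atTop (𝓝 1) :=
      ENNReal.coe_one ▸ ENNReal.tendsto_coe.2 hz
    rw [← hz'.liminf_eq, liminf_eq_iSup_iInf_of_nat]
  have hφP : ∀ n, (μ.withDensity (φ n)).map (p n) ≤ P n := fun n =>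
    (Measure.map_mono (withDensity_mono (ae_of_all _ fun z => iInf₂_le n le_rfl)) (hp n)).trans
      (hwP n)
  choose ζ hζ hPζ using fun n => exists_isProbabilityMeasure_eq_add_smul (hφP n)
  refine ⟨(ℕ × α) × ((n : ℕ) → X n), inferInstance, (μ.cdfLift φ).prod (Measure.infinitePi ζ),
    ?_, fun n ω => if ω.1.1 ≤ n then p n ω.1.2 else ω.2 n, fun ω => ω.1.2, fun ω => ω.1.1,
    fun n => ?_, measurable_snd.comp measurable_fst, measurable_fst.comp measurable_fst,
    fun n => ?_, ?_, fun ω n hn => if_pos hn⟩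
  · have := isProbabilityMeasure_cdfLift hφ hmono hsup
    infer_instance
  · exact Measurable.ite (measurable_fst (measurable_fst measurableSet_Iic))
      ((hp n).comp (measurable_snd.comp measurable_fst))
      ((measurable_pi_apply n).comp measurable_snd)
  · rw [cdfLift_prod_map_ite hφ hmono hsup _ (hp n) (measurable_pi_apply n),
      Measure.infinitePi_map_eval, hPζ n, Measure.map_apply (hp n) MeasurableSet.univ,
      preimage_univ]
  · rw [show (fun ω : (ℕ × α) × ((n : ℕ) → X n) => ω.1.2) = Prod.snd ∘ Prod.fst from rfl,
      ← Measure.map_map measurable_snd measurable_fst, Measure.map_fst_prod, measure_univ,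
      one_smul, cdfLift_map_snd hφ hmono hsup]

/-- If `Zₙᵗ → Zᵗ` in density for every finite `t ≥ 0`, then there exist times
`0 ≤ t₁ ≤ t₂ ≤ … → ∞`, a coupling `(Ẑ₁^{t₁}, Ẑ₂^{t₂}, …, Ẑ)` of
`Z₁^{t₁}, Z₂^{t₂}, …, Z`, and an `ℕ`-valued random variable `N` with
`Ẑₙ^{tₙ} = Ẑ^{tₙ}` for all `n ≥ N`. -/
theorem stmt10 {H : Type} [MeasurableSpace H]
    (Ht : ℝ → Type) [∀ t, MeasurableSpace (Ht t)]
    (π : ∀ t : ℝ, H → Ht t) (hπ : ∀ t, Measurable (π t))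
    (Qn : ℕ → Measure H) (Q : Measure H)
    [∀ n, IsProbabilityMeasure (Qn n)] [IsProbabilityMeasure Q]
    (hdens : ∀ s : ℝ, 0 ≤ s →
      ConvInDensity (fun n => (Qn n).map (π s)) (Q.map (π s))) :
    ∃ t : ℕ → ℝ, (∀ n, 0 ≤ t n) ∧ Monotone t ∧ Tendsto t atTop atTop ∧
      ∃ (Ω : Type) (_ : MeasurableSpace Ω) (Pr : Measure Ω),
        IsProbabilityMeasure Pr ∧
        ∃ (Zh : ∀ n, Ω → Ht (t n)) (Z : Ω → H) (N : Ω → ℕ),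
          (∀ n, Measurable (Zh n)) ∧ Measurable Z ∧ Measurable N ∧
          (∀ n, Pr.map (Zh n) = (Qn n).map (π (t n))) ∧
          Pr.map Z = Q ∧
          (∀ᵐ ω ∂Pr, ∀ n, N ω ≤ n → Zh n ω = π (t n) (Z ω)) := by
  have hratio : ∀ j : ℕ, ∃ r : ℕ → Ht j → ℝ≥0, (∀ m, Measurable (r m)) ∧
      (∀ m, (Q.map (π j)).withDensity (fun y => r m y) ≤ (Qn m).map (π j)) ∧
      ∀ᵐ y ∂(Q.map (π j)), Tendsto (fun m => r m y) atTop (𝓝 1) :=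
    fun j => (hdens j j.cast_nonneg).exists_tendsto_ae_one
  choose r hr hrQ hrlim using hratio
  obtain ⟨J, hJmono, hJtop, hJlim⟩ := exists_diagonal_tendsto_ae (μ := Q)
    (f := fun j m z => r j m (π j z)) (g := fun _ => 1) (fun j m => (hr j m).comp (hπ j))
    measurable_const fun j => ae_of_ae_map (hπ j).aemeasurable (hrlim j)
  have (n : ℕ) : IsProbabilityMeasure ((Qn n).map (π (J n))) :=
    Measure.isProbabilityMeasure_map (hπ _).aemeasurable
  obtain ⟨Ω, _, Pr, hPr, Zh, Z, N, hZh, hZ, hN, hlawZh, hlawZ, heq⟩ :=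
    exists_coupling_eventually_eq Q (fun n => (Qn n).map (π (J n))) (fun n => hπ (J n))
      (w := fun n z => r (J n) n (π (J n) z)) (fun n => (hr _ _).comp (hπ _))
      (fun n => (map_withDensity_comp Q (hπ _) (hr _ _).coe_nnreal_ennreal).trans_le (hrQ _ _))
      hJlim
  exact ⟨fun n => J n, fun n => (J n).cast_nonneg, fun a b hab => Nat.cast_le.2 (hJmono hab),
    tendsto_natCast_atTop_atTop.comp hJtop, Ω, _, Pr, hPr, Zh, Z, N, hZh, hZ, hN, hlawZh, hlawZ,
    ae_of_all _ heq⟩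
end

section
/- Let E be a metric space, P a Borel probability measure on E concentrated on a separable Borel set E₀. Then there exists a nested sequence of countable Borel partitions {A_{i₁…i_k} : (i₁,…,i_k) ∈ ℕᵏ}, k ∈ ℕ, of E into P-continuity sets such that A_{i₁…i_k} = ⋃_{j∈ℕ} A_{i₁…i_k j} for all k and indices, and for each k the sets A_{i₁…i_k} with all indices i₁,…,i_k ≥ 2 cover E₀ and each have diameter < 1/k. -/
/-!
For each `k`, cover `E₀` by balls of radius `< 1/(2(k+1))` centred at a countable dense subset,
choosing the radii so that the balls are `P`-continuity sets (only countably many spheres around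
a point can carry mass). Disjointifying the balls and adding the complement of their union gives a
partition `D k` into `P`-continuity sets: the union is open and contains `E₀`, so its frontier
misses `E₀`. Level `k` is the common refinement of `D 0, …, D k`; finite intersections of
continuity sets are continuity sets, and each cell of level `k` is the union of its refinements
by the cells of `D (k + 1)`.
-/

open MeasureTheory Set Function Metric TopologicalSpace

section Frontier

variable {X : Type*} [TopologicalSpace X]

theorem frontier_diff_subset_union (s t : Set X) : frontier (s \ t) ⊆ frontier s ∪ frontier t :=
  (frontier_inter_subset s tᶜ).trans <| union_subset_union inter_subset_left <| by
    rw [frontier_compl]; exact inter_subset_right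

theorem frontier_iInter_subset_of_finite {ι : Type*} [Finite ι] (s : ι → Set X) :
    frontier (⋂ i, s i) ⊆ ⋃ i, frontier (s i) := by
  intro x ⟨hcl, hint⟩
  rw [interior_iInter_of_finite, mem_iInter, not_forall] at hint
  obtain ⟨i, hi⟩ := hint
  exact mem_iUnion.2 ⟨i, closure_mono (iInter_subset s i) hcl, hi⟩

variable [MeasurableSpace X] (μ : Measure X)

theorem measure_frontier_disjointed {ι : Type*} [Preorder ι] [LocallyFiniteOrderBot ι]
    {f : ι → Set X} (hf : ∀ i, μ (frontier (f i)) = 0) (i : ι) :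
    μ (frontier (disjointed f i)) = 0 :=
  disjointedRec (p := fun t => μ (frontier t) = 0)
    (fun _ j ht => measure_mono_null (frontier_diff_subset_union _ _)
      (measure_union_null ht (hf j))) (hf i)

end Frontier

section Partition

variable {X : Type*} [TopologicalSpace X] [MeasurableSpace X]

structure ContinuityPartition (μ : Measure X) (ι : Type*) where
  cell : ι → Set X
  measurableSet_cell : ∀ i, MeasurableSet (cell i)
  measure_frontier_cell : ∀ i, μ (frontier (cell i)) = 0
  pairwise_disjoint_cell : Pairwise (Disjoint on cell)
  iUnion_cell : ⋃ i, cell i = univ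

namespace ContinuityPartition

variable {μ : Measure X} {ι : Type*}

theorem exists_mem_cell (D : ContinuityPartition μ ι) (x : X) : ∃ i, x ∈ D.cell i :=
  mem_iUnion.1 (D.iUnion_cell ▸ mem_univ x)

theorem iUnion_inter_cell (D : ContinuityPartition μ ι) (s : Set X) :
    ⋃ i, s ∩ D.cell i = s := by
  rw [← inter_iUnion, D.iUnion_cell, inter_univ]

def pi {κ : Type*} [Finite κ] {ι : κ → Type*} (D : ∀ m, ContinuityPartition μ (ι m)) :
    ContinuityPartition μ (∀ m, ι m) where
  cell i := ⋂ m, (D m).cell (i m)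
  measurableSet_cell i := .iInter fun m => (D m).measurableSet_cell _
  measure_frontier_cell i := measure_mono_null (frontier_iInter_subset_of_finite _)
    (measure_iUnion_null fun m => (D m).measure_frontier_cell _)
  pairwise_disjoint_cell i j hij := by
    obtain ⟨m, hm⟩ := Function.ne_iff.1 hij
    exact ((D m).pairwise_disjoint_cell hm).mono (iInter_subset _ m) (iInter_subset _ m)
  iUnion_cell := eq_univ_of_forall fun x => by
    choose i hi using fun m => (D m).exists_mem_cell x
    exact mem_iUnion.2 ⟨i, mem_iInter.2 hi⟩

section Pi

variable {κ : Type*} [Finite κ] {ι : κ → Type*} (D : ∀ m, ContinuityPartition μ (ι m))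

theorem pi_cell_subset (i : ∀ m, ι m) (m : κ) : (pi D).cell i ⊆ (D m).cell (i m) :=
  iInter_subset _ m

theorem subset_iUnion_pi_cell {s : Set X} {p : ∀ m, ι m → Prop}
    (h : ∀ m, s ⊆ ⋃ j ∈ {j | p m j}, (D m).cell j) :
    s ⊆ ⋃ i ∈ {i | ∀ m, p m (i m)}, (pi D).cell i := by
  intro x hx
  choose i hi using fun m => mem_iUnion₂.1 (h m hx)
  exact mem_iUnion₂.2 ⟨fun m => i m, fun m => (hi m).1, mem_iInter.2 fun m => (hi m).2⟩

end Pi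

def level (D : ℕ → ContinuityPartition μ ι) (k : ℕ) : ContinuityPartition μ (Fin (k + 1) → ι) :=
  pi fun m : Fin (k + 1) => D m

theorem level_cell_subset (D : ℕ → ContinuityPartition μ ι) (k : ℕ) (i : Fin (k + 1) → ι) :
    (level D k).cell i ⊆ (D k).cell (i (Fin.last k)) :=
  pi_cell_subset _ i (Fin.last k)

theorem level_cell_snoc (D : ℕ → ContinuityPartition μ ι) (k : ℕ) (i : Fin (k + 1) → ι)
    (j : ι) : (level D (k + 1)).cell (Fin.snoc i j) = (level D k).cell i ∩ (D (k + 1)).cell j := by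
  ext x
  simp only [level, pi, mem_iInter, mem_inter_iff, Fin.forall_fin_succ', Fin.snoc_castSucc,
    Fin.snoc_last, Fin.val_castSucc, Fin.val_last]

theorem level_cell_eq_iUnion_snoc (D : ℕ → ContinuityPartition μ ι) (k : ℕ)
    (i : Fin (k + 1) → ι) : (level D k).cell i = ⋃ j, (level D (k + 1)).cell (Fin.snoc i j) := by
  simp_rw [level_cell_snoc, iUnion_inter_cell]


section OfCover

def coverCell (B : ℕ → Set X) : ℕ → Set X
  | 0 => (⋃ n, B n)ᶜ
  | n + 1 => disjointed B n

variable {B : ℕ → Set X}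

def ofCover (hB : ∀ n, MeasurableSet (B n)) (hBμ : ∀ n, μ (frontier (B n)) = 0)
    (hUμ : μ (frontier (⋃ n, B n)) = 0) : ContinuityPartition μ ℕ where
  cell := coverCell B
  measurableSet_cell
    | 0 => (MeasurableSet.iUnion hB).compl
    | n + 1 => MeasurableSet.disjointed hB n
  measure_frontier_cell
    | 0 => by rwa [coverCell, frontier_compl]
    | n + 1 => measure_frontier_disjointed μ hBμ n
  pairwise_disjoint_cell := by
    have hdisj (n : ℕ) : Disjoint (coverCell B 0) (coverCell B (n + 1)) :=
      disjoint_compl_left.mono_right ((disjointed_subset B n).trans (subset_iUnion B n))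
    rintro (_ | m) (_ | n) hmn
    · exact absurd rfl hmn
    · exact hdisj n
    · exact (hdisj m).symm
    · exact disjoint_disjointed B (by omega)
  iUnion_cell := eq_univ_of_forall fun x => by
    by_cases hx : x ∈ ⋃ n, B n
    · rw [← iUnion_disjointed] at hx
      obtain ⟨n, hn⟩ := mem_iUnion.1 hx
      exact mem_iUnion.2 ⟨n + 1, hn⟩
    · exact mem_iUnion.2 ⟨0, hx⟩

variable (hB : ∀ n, MeasurableSet (B n)) (hBμ : ∀ n, μ (frontier (B n)) = 0)
  (hUμ : μ (frontier (⋃ n, B n)) = 0)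

theorem ofCover_cell_succ_subset (n : ℕ) : (ofCover hB hBμ hUμ).cell (n + 1) ⊆ B n :=
  disjointed_subset B n

theorem iUnion_subset_iUnion_ofCover_cell :
    ⋃ n, B n ⊆ ⋃ n ∈ {n | 0 < n}, (ofCover hB hBμ hUμ).cell n := by
  rw [← iUnion_disjointed]
  exact iUnion_subset fun n => subset_biUnion_of_mem (u := coverCell B) n.succ_pos

end OfCover

end ContinuityPartition

end Partition

section Metric

variable {E : Type*} [PseudoMetricSpace E]

theorem ediam_ball_lt {c : E} {r ε : ℝ} (hε : 0 < ε) (h : 2 * r < ε) :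
    ediam (ball c r) < ENNReal.ofReal ε := by
  refine (ediam_le_of_forall_dist_le fun x hx y hy => ?_).trans_lt
    ((ENNReal.ofReal_lt_ofReal_iff hε).2 h)
  linarith [dist_triangle_right x y c, mem_ball.1 hx, mem_ball.1 hy]

variable [MeasurableSpace E] [OpensMeasurableSpace E] (μ : Measure E) [SFinite μ]

theorem exists_ball_cover_null_frontier {s : Set E} (hs : IsSeparable s) (hne : s.Nonempty)
    {ε : ℝ} (hε : 0 < ε) :
    ∃ (c : ℕ → E) (r : ℕ → ℝ), (∀ n, r n < ε) ∧ (∀ n, μ (frontier (ball (c n) (r n))) = 0) ∧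
      s ⊆ ⋃ n, ball (c n) (r n) := by
  obtain ⟨t, htc, hst⟩ := hs
  obtain ⟨c, rfl⟩ := htc.exists_eq_range (closure_nonempty_iff.1 (hne.mono hst))
  choose r hr hrμ using fun n => exists_null_frontier_thickening μ {c n} (half_lt_self hε)
  simp only [thickening_singleton] at hrμ
  refine ⟨c, r, fun n => (hr n).2, hrμ, fun x hx => ?_⟩
  obtain ⟨_, ⟨n, rfl⟩, hxn⟩ := mem_closure_iff.1 (hst hx) (ε / 2) (half_pos hε)
  exact mem_iUnion.2 ⟨n, mem_ball.2 (hxn.trans (hr n).1)⟩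

theorem exists_continuityPartition_ediam_lt {s : Set E} (hs : IsSeparable s) (hne : s.Nonempty)
    (hμ : μ sᶜ = 0) {ε : ℝ} (hε : 0 < ε) :
    ∃ D : ContinuityPartition μ ℕ, (∀ n, 0 < n → ediam (D.cell n) < ENNReal.ofReal ε) ∧
      s ⊆ ⋃ n ∈ {n | 0 < n}, D.cell n := by
  obtain ⟨c, r, hr, hrμ, hcover⟩ := exists_ball_cover_null_frontier μ hs hne (half_pos hε)
  have hUμ : μ (frontier (⋃ n, ball (c n) (r n))) = 0 := by
    refine measure_mono_null ?_ hμ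
    rw [(isOpen_iUnion fun n => isOpen_ball).frontier_eq]
    exact fun x hx hxs => hx.2 (hcover hxs)
  refine ⟨.ofCover (fun n => measurableSet_ball) hrμ hUμ, fun n hn => ?_,
    hcover.trans (ContinuityPartition.iUnion_subset_iUnion_ofCover_cell _ _ _)⟩
  obtain ⟨m, rfl⟩ := Nat.exists_eq_add_one.2 hn
  exact (ediam_mono (ContinuityPartition.ofCover_cell_succ_subset _ _ _ m)).trans_lt
    (ediam_ball_lt hε (by linarith [hr m]))

end Metric

/-- Level `k` of the paper is `A (k - 1)` here, and the paper's exceptional index `1` is `0`. -/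
theorem stmt17 {E : Type*} [MetricSpace E] [MeasurableSpace E] [BorelSpace E]
    (P : Measure E) [IsProbabilityMeasure P]
    (E0 : Set E) (hE0 : MeasurableSet E0) (hsep : TopologicalSpace.IsSeparable E0)
    (hP1 : P E0 = 1) :
    ∃ A : (k : ℕ) → (Fin (k + 1) → ℕ) → Set E,
      (∀ k i, MeasurableSet (A k i)) ∧
      (∀ k i, P (frontier (A k i)) = 0) ∧
      (∀ k, Pairwise (Function.onFun Disjoint (A k))) ∧
      (∀ k, (⋃ i, A k i) = Set.univ) ∧
      (∀ k i, A k i = ⋃ j : ℕ, A (k + 1) (Fin.snoc i j)) ∧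
      (∀ k, ∀ i : Fin (k + 1) → ℕ, (∀ m, 0 < i m) →
        EMetric.diam (A k i) < ENNReal.ofReal (1 / (k + 1))) ∧
      (∀ k, E0 ⊆ ⋃ i ∈ {i : Fin (k + 1) → ℕ | ∀ m, 0 < i m}, A k i) := by
  have hne : E0.Nonempty := nonempty_of_measure_ne_zero (hP1 ▸ one_ne_zero)
  have hnull : P E0ᶜ = 0 := (prob_compl_eq_zero_iff hE0).2 hP1
  choose D hdiam hcover using fun k : ℕ =>
    exists_continuityPartition_ediam_lt P hsep hne hnull (ε := 1 / (k + 1)) (by positivity)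
  open ContinuityPartition in
  refine ⟨fun k => (level D k).cell, fun k => (level D k).measurableSet_cell,
    fun k => (level D k).measure_frontier_cell, fun k => (level D k).pairwise_disjoint_cell,
    fun k => (level D k).iUnion_cell, level_cell_eq_iUnion_snoc D, fun k i hi => ?_,
    fun k => subset_iUnion_pi_cell _ fun m => hcover m⟩
  exact (ediam_mono (level_cell_subset D k i)).trans_lt (hdiam k _ (hi _))
end
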